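/- arXiv:2206.10443 — 6 statements merged into one kernel-verified Lean document; each statement's English description precedes it below -/
import Mathlib

section
/- For every full-rank lattice Λ ⊂ ℝⁿ and every σ > 0, the L∞ flatness factor satisfies the strict lower bound ε_Λ(σ) > V(Λ)·(2πσ²)^{−n/2} − 1 = (γ_Λ(σ)/(2π))^{n/2} − 1, where γ_Λ(σ) = V(Λ)^{2/n}/σ². In particular, ε_Λ(σ) cannot vanish (as n → ∞ along any sequence of lattices) when the volume-to-noise ratio γ_Λ(σ) is a fixed constant greater than 2π. -/
open MeasureTheory Filter

noncomputable section

/-- The centered Gaussian density `f_σ` on `ℝⁿ`. -/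
def gaussF (n : ℕ) (σ : ℝ) (x : EuclideanSpace ℝ (Fin n)) : ℝ :=
  (2 * Real.pi * σ ^ 2) ^ (-(n : ℝ) / 2) * Real.exp (-‖x‖ ^ 2 / (2 * σ ^ 2))

/-- The `Λ`-periodic Gaussian density `f_{σ,Λ}(x) = Σ_{λ∈Λ} f_σ(x+λ)`. -/
def latF (n : ℕ) (σ : ℝ) (L : Set (EuclideanSpace ℝ (Fin n)))
    (x : EuclideanSpace ℝ (Fin n)) : ℝ :=
  ∑' l : L, gaussF n σ (x + (l : EuclideanSpace ℝ (Fin n)))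

/-- `L` is the full-rank lattice generated by the invertible matrix `B`
(so its covolume is `|B.det|`). -/
def IsLattice (n : ℕ) (L : Set (EuclideanSpace ℝ (Fin n)))
    (B : Matrix (Fin n) (Fin n) ℝ) : Prop :=
  IsUnit B.det ∧
    L = {x : EuclideanSpace ℝ (Fin n) |
          ∃ z : Fin n → ℤ, ∀ i, x i = B.mulVec (fun j => (z j : ℝ)) i}

/-- `R` is a fundamental region of the lattice `L`: measurable, with pairwise
disjoint translates `R + λ` covering `ℝⁿ`. -/
def IsFundamental (n : ℕ) (L R : Set (EuclideanSpace ℝ (Fin n))) : Prop :=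
  MeasurableSet R ∧
    (L.Pairwise fun l₁ l₂ => Disjoint ((· + l₁) '' R) ((· + l₂) '' R)) ∧
    (⋃ l ∈ L, (· + l) '' R) = Set.univ

/-! The periodic Gaussian `f_{σ,Λ}` is bounded: by periodicity it suffices to evaluate it on a
bounded fundamental domain, where it is dominated by the summable lattice Gaussian
`∑ λ, exp (-‖λ‖² / 4σ²)`. Hence its supremum is at least its value at `0`, which strictly
exceeds the `λ = 0` term `(2πσ²)^{-n/2}`, as a nonzero lattice vector adds a positive term. -/

open Module Real

theorem ZLattice.summable_exp_neg_mul_norm_sq {E : Type*} [NormedAddCommGroup E]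
    [NormedSpace ℝ E] [FiniteDimensional ℝ E] (Λ : Submodule ℤ E) [DiscreteTopology Λ]
    {a : ℝ} (ha : 0 < a) : Summable fun z : Λ => exp (-(a * ‖z‖ ^ 2)) := by
  set k := finrank ℤ Λ + 1
  refine Summable.of_norm_bounded_eventually
    ((ZLattice.summable_norm_pow_inv Λ (2 * k) (by omega)).mul_left (k.factorial / a ^ k)) ?_
  filter_upwards [eventually_cofinite_ne 0] with z hz
  have hz : 0 < ‖z‖ := norm_pos_iff.mpr hz
  -- `exp t ≥ t ^ k / k!` dominates the Gaussian by `‖z‖⁻¹ ^ (2k)`, summable since `2k > rank Λ`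
  have hexp := pow_div_factorial_le_exp (a * ‖z‖ ^ 2) (by positivity) k
  have hbound : k.factorial / a ^ k * ‖z‖⁻¹ ^ (2 * k) = ((a * ‖z‖ ^ 2) ^ k / k.factorial)⁻¹ := by
    rw [inv_pow, inv_div, mul_pow, ← pow_mul, mul_comm 2 k]
    field_simp
  rw [norm_of_nonneg (exp_pos _).le, exp_neg, hbound]
  exact inv_anti₀ (by positivity) hexp

section PeriodicGaussian

variable {n : ℕ} {σ : ℝ}

lemma gaussF_pos (hσ : σ ≠ 0) (x : EuclideanSpace ℝ (Fin n)) : 0 < gaussF n σ x := by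
  unfold gaussF
  positivity

lemma gaussF_nonneg (x : EuclideanSpace ℝ (Fin n)) : 0 ≤ gaussF n σ x := by
  unfold gaussF
  positivity

lemma gaussF_zero : gaussF n σ 0 = (2 * π * σ ^ 2) ^ (-(n : ℝ) / 2) := by
  simp [gaussF]

lemma gaussF_add_le (x y : EuclideanSpace ℝ (Fin n)) :
    gaussF n σ (x + y) ≤
      gaussF n σ 0 * exp (‖x‖ ^ 2 / (2 * σ ^ 2)) * exp (-((4 * σ ^ 2)⁻¹ * ‖y‖ ^ 2)) := by
  have hy : ‖y‖ ≤ ‖x + y‖ + ‖x‖ := by simpa using norm_sub_le (x + y) x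
  have hsq : ‖y‖ ^ 2 ≤ 2 * ‖x + y‖ ^ 2 + 2 * ‖x‖ ^ 2 := by
    nlinarith [norm_nonneg y, sq_nonneg (‖x + y‖ - ‖x‖)]
  rw [gaussF_zero, gaussF, mul_assoc _ (exp _), ← exp_add]
  gcongr
  have hgap : ‖x‖ ^ 2 / (2 * σ ^ 2) + -((4 * σ ^ 2)⁻¹ * ‖y‖ ^ 2) - -‖x + y‖ ^ 2 / (2 * σ ^ 2) =
      (2 * ‖x + y‖ ^ 2 + 2 * ‖x‖ ^ 2 - ‖y‖ ^ 2) * (4 * σ ^ 2)⁻¹ := by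
    ring
  rw [← sub_nonneg, hgap]
  exact mul_nonneg (sub_nonneg.mpr hsq) (by positivity)

variable (Λ : Submodule ℤ (EuclideanSpace ℝ (Fin n)))

lemma summable_gaussF_add [DiscreteTopology Λ] (hσ : σ ≠ 0) (x : EuclideanSpace ℝ (Fin n)) :
    Summable fun z : Λ => gaussF n σ (x + z) := by
  have ha : 0 < (4 * σ ^ 2)⁻¹ := by positivity
  exact ((ZLattice.summable_exp_neg_mul_norm_sq Λ ha).mul_left _).of_nonneg_of_le
    (fun _ => gaussF_nonneg _) (fun z => gaussF_add_le x z)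

lemma latF_eq_tsum (x : EuclideanSpace ℝ (Fin n)) :
    latF n σ Λ x = ∑' z : Λ, gaussF n σ (x + z) :=
  rfl

lemma latF_nonneg (x : EuclideanSpace ℝ (Fin n)) : 0 ≤ latF n σ Λ x :=
  tsum_nonneg fun _ => gaussF_nonneg _

lemma latF_periodic {y : EuclideanSpace ℝ (Fin n)} (hy : y ∈ Λ) :
    Function.Periodic (latF n σ Λ) y := fun x => by
  rw [latF_eq_tsum, latF_eq_tsum, ← (Equiv.addLeft (⟨y, hy⟩ : Λ)).tsum_eq (gaussF n σ <| x + ·)]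
  simp only [Equiv.coe_addLeft, Submodule.coe_add, add_assoc]

lemma latF_le_of_norm_le [DiscreteTopology Λ] (hσ : σ ≠ 0) {x : EuclideanSpace ℝ (Fin n)} {M : ℝ}
    (hx : ‖x‖ ≤ M) :
    latF n σ Λ x ≤ gaussF n σ 0 * exp (M ^ 2 / (2 * σ ^ 2)) *
      ∑' z : Λ, exp (-((4 * σ ^ 2)⁻¹ * ‖z‖ ^ 2)) := by
  rw [latF_eq_tsum, ← tsum_mul_left]
  refine (summable_gaussF_add Λ hσ x).tsum_le_tsum (fun z => (gaussF_add_le x z).trans ?_)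
    ((ZLattice.summable_exp_neg_mul_norm_sq Λ (by positivity)).mul_left _)
  refine mul_le_mul_of_nonneg_right (mul_le_mul_of_nonneg_left ?_ (gaussF_nonneg 0))
    (exp_pos _).le
  gcongr

lemma bddAbove_range_latF_span {ι : Type*} [Fintype ι]
    (b : Basis ι ℝ (EuclideanSpace ℝ (Fin n))) (hσ : σ ≠ 0) :
    BddAbove (Set.range (latF n σ (Submodule.span ℤ (Set.range b)))) := by
  have hfract x :=
    latF_le_of_norm_le (Submodule.span ℤ (Set.range b)) hσ (ZSpan.norm_fract_le b x)
  exact ⟨_, Set.forall_mem_range.mpr fun x =>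
    ((latF_periodic _ (ZSpan.floor b x).2).sub_eq x).symm.trans_le (hfract x)⟩

lemma gaussF_zero_lt_latF_zero [DiscreteTopology Λ] (hσ : σ ≠ 0) {y : EuclideanSpace ℝ (Fin n)}
    (hy : y ∈ Λ) (hy0 : y ≠ 0) : gaussF n σ 0 < latF n σ Λ 0 := by
  have hne : (0 : Λ) ≠ ⟨y, hy⟩ := fun h => hy0 (congrArg Subtype.val h).symm
  have hpair := (summable_gaussF_add Λ hσ 0).sum_le_tsum {0, ⟨y, hy⟩}
    (fun _ _ => gaussF_nonneg _)
  rw [Finset.sum_pair hne] at hpair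
  rw [latF_eq_tsum]
  simp only [ZeroMemClass.coe_zero, zero_add] at hpair ⊢
  linarith [gaussF_pos hσ y]

end PeriodicGaussian

lemma IsLattice.exists_basis {n : ℕ} {L : Set (EuclideanSpace ℝ (Fin n))}
    {B : Matrix (Fin n) (Fin n) ℝ} (hL : IsLattice n L B) :
    ∃ b : Basis (Fin n) ℝ (EuclideanSpace ℝ (Fin n)), L = Submodule.span ℤ (Set.range b) := by
  set b₀ := (EuclideanSpace.basisFun (Fin n) ℝ).toBasis
  set b := b₀.map (Matrix.toLinearEquiv b₀ B hL.1)
  have hb : ∀ j i, b j i = B i j := fun j i => by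
    rw [Basis.map_apply, Matrix.toLinearEquiv_apply, Matrix.toLin_self]
    simp [b₀, Pi.single_apply]
  refine ⟨b, Set.ext fun x => ?_⟩
  rw [hL.2, Set.mem_ofPred_eq, SetLike.mem_coe, Submodule.mem_span_range_iff_exists_fun]
  refine exists_congr fun z => ⟨fun hz => ?_, fun hz => ?_⟩
  · ext i
    simp [hz, hb, Matrix.mulVec, dotProduct, mul_comm]
  · intro i
    simp [← hz, hb, Matrix.mulVec, dotProduct, mul_comm]

lemma mul_rpow_neg_div_two_eq {V c : ℝ} (hV : 0 < V) (hc : 0 < c) {n : ℝ} (hn : n ≠ 0) :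
    V * c ^ (-n / 2) = (V ^ (2 / n) / c) ^ (n / 2) := by
  rw [div_rpow (by positivity) hc.le, ← rpow_mul hV.le, show 2 / n * (n / 2) = 1 by field_simp,
    rpow_one, neg_div, rpow_neg hc.le, ← div_eq_mul_inv]

lemma bddAbove_range_abs_mul_sub {ι : Type*} {f : ι → ℝ} (hf : BddAbove (Set.range f))
    (hf0 : 0 ≤ f) (a c : ℝ) : BddAbove (Set.range fun i => |a * f i - c|) := by
  obtain ⟨C, hC⟩ := hf
  refine ((isCompact_Icc (a := 0) (b := C)).image (f := fun t => |a * t - c|)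
    (by fun_prop)).bddAbove.mono ?_
  rintro _ ⟨i, rfl⟩
  exact ⟨f i, ⟨hf0 i, hC ⟨i, rfl⟩⟩, rfl⟩

/-- strict lower bound on the L∞ flatness factor in terms of the
volume-to-noise ratio. -/
theorem stmt_7 (n : ℕ) (hn : 1 ≤ n) (L : Set (EuclideanSpace ℝ (Fin n)))
    (B : Matrix (Fin n) (Fin n) ℝ) (hL : IsLattice n L B)
    (σ : ℝ) (hσ : 0 < σ) :
    (⨆ x : EuclideanSpace ℝ (Fin n), abs (|B.det| * latF n σ L x - 1)) >
        |B.det| * (2 * Real.pi * σ ^ 2) ^ (-(n : ℝ) / 2) - 1 ∧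
      |B.det| * (2 * Real.pi * σ ^ 2) ^ (-(n : ℝ) / 2) - 1 =
        ((|B.det| ^ (2 / (n : ℝ)) / σ ^ 2) / (2 * Real.pi)) ^ ((n : ℝ) / 2) - 1 := by
  have hV : 0 < |B.det| := abs_pos.mpr hL.1.ne_zero
  obtain ⟨b, rfl⟩ := hL.exists_basis
  refine ⟨?_, ?_⟩
  · have hbdd := bddAbove_range_abs_mul_sub (bddAbove_range_latF_span b hσ.ne')
      (latF_nonneg _) |B.det| 1
    have hb₀ : b ⟨0, hn⟩ ∈ Submodule.span ℤ (Set.range b) := Submodule.subset_span ⟨_, rfl⟩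
    calc |B.det| * (2 * π * σ ^ 2) ^ (-(n : ℝ) / 2) - 1 = |B.det| * gaussF n σ 0 - 1 := by
          rw [gaussF_zero]
      _ < |B.det| * latF n σ _ 0 - 1 := by
          gcongr
          exact gaussF_zero_lt_latF_zero _ hσ.ne' hb₀ (b.ne_zero _)
      _ ≤ _ := (le_abs_self _).trans (le_ciSup hbdd 0)
  · rw [mul_rpow_neg_div_two_eq hV (by positivity) (by positivity), div_div, mul_comm (σ ^ 2)]
end
end

section
/- Let Λ₃ ⊂ Λ₂ ⊂ Λ₁ be nested full-rank lattices in ℝⁿ, let R(Λ₃) be a fundamental region of Λ₃ and F a fundamental region of Λ₂, with associated quantizer Q_F : ℝⁿ → Λ₂ (the unique map with x − Q_F(x) ∈ F for all x) and modulo map [y] mod R(Λ₃) ∈ R(Λ₃) (the unique element of (y + Λ₃) ∩ R(Λ₃)). Then the map x ↦ ( [Q_F(x)] mod R(Λ₃), x − Q_F(x) ) is a bijection from Λ₁ ∩ R(Λ₃) onto (Λ₂ ∩ R(Λ₃)) × (Λ₁ ∩ F). -/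
open MeasureTheory Filter

noncomputable section

lemma lat_sub {n : ℕ} {L : Set (EuclideanSpace ℝ (Fin n))}
    {B : Matrix (Fin n) (Fin n) ℝ} (h : IsLattice n L B)
    {a b : EuclideanSpace ℝ (Fin n)} (ha : a ∈ L) (hb : b ∈ L) : a - b ∈ L := by
  rw [h.2] at ha hb ⊢
  obtain ⟨za, hza⟩ := ha
  obtain ⟨zb, hzb⟩ := hb
  refine ⟨za - zb, fun i => ?_⟩
  have : (fun j => ((za - zb) j : ℝ)) = (fun j => (za j : ℝ)) - fun j => (zb j : ℝ) := by
    funext j; simp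
  rw [this, Matrix.mulVec_sub]
  simp [hza i, hzb i]

lemma lat_add {n : ℕ} {L : Set (EuclideanSpace ℝ (Fin n))}
    {B : Matrix (Fin n) (Fin n) ℝ} (h : IsLattice n L B)
    {a b : EuclideanSpace ℝ (Fin n)} (ha : a ∈ L) (hb : b ∈ L) : a + b ∈ L := by
  rw [h.2] at ha hb ⊢
  obtain ⟨za, hza⟩ := ha
  obtain ⟨zb, hzb⟩ := hb
  refine ⟨za + zb, fun i => ?_⟩
  have : (fun j => ((za + zb) j : ℝ)) = (fun j => (za j : ℝ)) + fun j => (zb j : ℝ) := by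
    funext j; simp
  rw [this, Matrix.mulVec_add]
  simp [hza i, hzb i]

lemma lat_zero {n : ℕ} {L : Set (EuclideanSpace ℝ (Fin n))}
    {B : Matrix (Fin n) (Fin n) ℝ} (h : IsLattice n L B) :
    (0 : EuclideanSpace ℝ (Fin n)) ∈ L := by
  rw [h.2]
  refine ⟨0, fun i => ?_⟩
  simp [Matrix.mulVec]

lemma fund_unique {n : ℕ} {L R : Set (EuclideanSpace ℝ (Fin n))}
    (h : IsFundamental n L R) {l₁ l₂ x : EuclideanSpace ℝ (Fin n)}
    (h₁ : l₁ ∈ L) (h₂ : l₂ ∈ L) (hx₁ : x - l₁ ∈ R) (hx₂ : x - l₂ ∈ R) :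
    l₁ = l₂ := by
  by_contra hne
  have hd := h.2.1 h₁ h₂ hne
  have m₁ : x ∈ (· + l₁) '' R := ⟨x - l₁, hx₁, by simp⟩
  have m₂ : x ∈ (· + l₂) '' R := ⟨x - l₂, hx₂, by simp⟩
  exact Set.disjoint_left.1 hd m₁ m₂

/-- Remark 6 of the paper: the map
x ↦ ([Q_F(x)] mod R(Λ₃), x − Q_F(x)) is a bijection from Λ₁ ∩ R(Λ₃) onto
(Λ₂ ∩ R(Λ₃)) × (Λ₁ ∩ F). -/
theorem stmt_12 (n : ℕ) (L₁ L₂ L₃ : Set (EuclideanSpace ℝ (Fin n)))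
    (B₁ B₂ B₃ : Matrix (Fin n) (Fin n) ℝ)
    (h₁ : IsLattice n L₁ B₁) (h₂ : IsLattice n L₂ B₂) (h₃ : IsLattice n L₃ B₃)
    (h₃₂ : L₃ ⊆ L₂) (h₂₁ : L₂ ⊆ L₁)
    (R₃ : Set (EuclideanSpace ℝ (Fin n))) (hR₃ : IsFundamental n L₃ R₃)
    (F : Set (EuclideanSpace ℝ (Fin n))) (hF : IsFundamental n L₂ F)
    (Q : EuclideanSpace ℝ (Fin n) → EuclideanSpace ℝ (Fin n))
    (hQ : ∀ x, Q x ∈ L₂ ∧ x - Q x ∈ F)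
    (m : EuclideanSpace ℝ (Fin n) → EuclideanSpace ℝ (Fin n))
    (hm : ∀ y, m y ∈ R₃ ∧ m y - y ∈ L₃) :
    Set.BijOn (fun x => (m (Q x), x - Q x)) (L₁ ∩ R₃) ((L₂ ∩ R₃) ×ˢ (L₁ ∩ F)) := by
  have uR : ∀ {a b : EuclideanSpace ℝ (Fin n)}, a ∈ R₃ → b ∈ R₃ → a - b ∈ L₃ → a = b := by
    intro a b ha hb hab
    have h0 : (0 : EuclideanSpace ℝ (Fin n)) ∈ L₃ := lat_zero h₃
    have heq : a - b = 0 :=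
      fund_unique hR₃ (x := a) hab h0 (by simpa using hb) (by simpa using ha)
    exact sub_eq_zero.1 heq
  refine ⟨?_, ?_, ?_⟩
  · rintro x ⟨hx₁, hx₃⟩
    refine ⟨⟨?_, (hm (Q x)).1⟩, ?_, (hQ x).2⟩
    · have he : m (Q x) = Q x + (m (Q x) - Q x) := by abel
      show m (Q x) ∈ L₂
      rw [he]
      exact lat_add h₂ (hQ x).1 (h₃₂ (hm (Q x)).2)
    · show x - Q x ∈ L₁
      exact lat_sub h₁ hx₁ (h₂₁ (hQ x).1)
  · rintro x ⟨hx₁, hx₃⟩ y ⟨hy₁, hy₃⟩ hxy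
    simp only [Prod.mk.injEq] at hxy
    obtain ⟨hmq, hsub⟩ := hxy
    have hQd : Q x - Q y ∈ L₃ := by
      have he : Q x - Q y = (m (Q y) - Q y) - (m (Q x) - Q x) := by rw [hmq]; abel
      rw [he]
      exact lat_sub h₃ (hm (Q y)).2 (hm (Q x)).2
    have hxyL : x - y ∈ L₃ := by
      have he : x - y = Q x - Q y := sub_eq_sub_iff_sub_eq_sub.1 hsub
      rw [he]; exact hQd
    exact uR hx₃ hy₃ hxyL
  · rintro ⟨c, f⟩ ⟨⟨hcL, hcR⟩, hfL, hfF⟩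
    simp only at hcL hcR hfL hfF
    set y := c + f with hy
    set x := m y with hxdef
    have hlam : x - y ∈ L₃ := (hm y).2
    have hxR : x ∈ R₃ := (hm y).1
    have hxL₁ : x ∈ L₁ := by
      have he : x = y + (x - y) := by abel
      rw [he]
      exact lat_add h₁ (lat_add h₁ (h₂₁ hcL) hfL) (h₂₁ (h₃₂ hlam))
    have hQx : Q x = c + (x - y) := by
      refine fund_unique hF (hQ x).1 (lat_add h₂ hcL (h₃₂ hlam)) (hQ x).2 ?_
      have he : x - (c + (x - y)) = f := by rw [hy]; abel
      rw [he]; exact hfF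
    refine ⟨x, ⟨hxL₁, hxR⟩, ?_⟩
    have hmQx : m (Q x) = c := by
      refine uR (hm (Q x)).1 hcR ?_
      have he : m (Q x) - c = (m (Q x) - Q x) + (x - y) := by rw [hQx]; abel
      rw [he]
      exact lat_add h₃ (hm (Q x)).2 hlam
    have hsub : x - Q x = f := by rw [hQx, hy]; abel
    simp [hmQx, hsub]
end
end

section
/- Let σ₁, σ₂, σ_Q and R_P be real numbers with 0 < σ₁ < σ₂ and R_P > 0. If σ_Q² > σ₁²/(e^{2R_P} − 1), then (σ₂² + σ_Q²)/(σ₁² + σ_Q²) < e^{−2R_P} + (σ₂²/σ₁²)·(1 − e^{−2R_P}). Consequently, ½·log((σ₂² + σ_Q²)/(σ₁² + σ_Q²)) < ½·log( e^{−2R_P} + (σ₂²/σ₁²)·(1 − e^{−2R_P}) ), so the achievable secret key rate of the lattice scheme with quantization parameter σ_Q lies below the optimal public-rate/secret-key-rate trade-off curve at public rate R_P. -/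
/-- the achievable secret key rate of the lattice scheme with
quantization parameter σ_Q lies below the optimal trade-off curve at public
rate R_P. -/
theorem stmt_14 (σ₁ σ₂ σQ RP : ℝ) (h1 : 0 < σ₁) (h12 : σ₁ < σ₂) (hRP : 0 < RP)
    (hQ : σQ ^ 2 > σ₁ ^ 2 / (Real.exp (2 * RP) - 1)) :
    (σ₂ ^ 2 + σQ ^ 2) / (σ₁ ^ 2 + σQ ^ 2) <
        Real.exp (-(2 * RP)) + σ₂ ^ 2 / σ₁ ^ 2 * (1 - Real.exp (-(2 * RP))) ∧
      1 / 2 * Real.log ((σ₂ ^ 2 + σQ ^ 2) / (σ₁ ^ 2 + σQ ^ 2)) <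
        1 / 2 * Real.log
          (Real.exp (-(2 * RP)) + σ₂ ^ 2 / σ₁ ^ 2 * (1 - Real.exp (-(2 * RP)))) := by
  set E := Real.exp (2 * RP) with hE
  have hE1 : 1 < E := by
    rw [hE]
    have : (0:ℝ) < 2 * RP := by linarith
    calc (1:ℝ) = Real.exp 0 := (Real.exp_zero).symm
    _ < Real.exp (2 * RP) := Real.exp_lt_exp.mpr this
  have hEpos : 0 < E := by linarith
  have hne : Real.exp (-(2 * RP)) = E⁻¹ := by rw [Real.exp_neg, hE]
  have hq2 : 0 ≤ σQ ^ 2 := sq_nonneg _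
  have ha : 0 < σ₁ ^ 2 := by positivity
  have hb : σ₁ ^ 2 < σ₂ ^ 2 := by nlinarith
  have hQ' : σ₁ ^ 2 < σQ ^ 2 * (E - 1) := by
    have h := (div_lt_iff₀ (by linarith : (0:ℝ) < E - 1)).mp hQ
    linarith
  -- key inequality: a * e < q * (1 - e)
  have hkey : σ₁ ^ 2 * E⁻¹ < σQ ^ 2 * (1 - E⁻¹) := by
    have hEinv : 0 < E⁻¹ := by positivity
    have h := mul_lt_mul_of_pos_right hQ' hEinv
    have hEE : E * E⁻¹ = 1 := mul_inv_cancel₀ (ne_of_gt hEpos)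
    nlinarith
  have hden : 0 < σ₁ ^ 2 + σQ ^ 2 := by linarith
  have hfirst : (σ₂ ^ 2 + σQ ^ 2) / (σ₁ ^ 2 + σQ ^ 2) <
      Real.exp (-(2 * RP)) + σ₂ ^ 2 / σ₁ ^ 2 * (1 - Real.exp (-(2 * RP))) := by
    rw [hne, div_lt_iff₀ hden, div_mul_eq_mul_div, ← sub_pos]
    have expand : (E⁻¹ + σ₂ ^ 2 * (1 - E⁻¹) / σ₁ ^ 2) * (σ₁ ^ 2 + σQ ^ 2)
        - (σ₂ ^ 2 + σQ ^ 2)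
        = (σ₂ ^ 2 - σ₁ ^ 2) * (σQ ^ 2 * (1 - E⁻¹) - σ₁ ^ 2 * E⁻¹) / σ₁ ^ 2 := by
      field_simp
      ring
    rw [expand]
    apply div_pos (by nlinarith) ha
  have hLpos : 0 < (σ₂ ^ 2 + σQ ^ 2) / (σ₁ ^ 2 + σQ ^ 2) := div_pos (by nlinarith) hden
  refine ⟨hfirst, ?_⟩
  have := Real.log_lt_log hLpos hfirst
  linarith
end

section
/- Let X and Y be finite sets, let p be a probability distribution on X with p(x) > 0 for all x ∈ X, and let W be a channel from X to Y, i.e. for each x ∈ X a probability distribution W_x on Y, with W_x(y) > 0 for all x, y. Let q(y) = Σ_{x∈X} p(x)·W_x(y) be the output distribution and define ψ(ρ) = log Σ_{x∈X} p(x) Σ_{y∈Y} W_x(y)^{1+ρ} · q(y)^{−ρ} for ρ ≥ 0. Then ψ is twice differentiable at ρ = 0 and ψ''(0) = Σ_{x} p(x) Σ_{y} W_x(y)·( log(W_x(y)/q(y)) )² − ( Σ_{x} p(x) Σ_{y} W_x(y)·log(W_x(y)/q(y)) )². -/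
/-!
Substituting `W^(1+ρ) q^(-ρ) = W · exp (ρ · log (W / q))` turns ψ into the cumulant generating
function `ρ ↦ log ∑ᵢ aᵢ exp (ρ cᵢ)` of the information density `c(x, y) = log (W_x(y) / q(y))`
under the joint law `a(x, y) = p(x) W_x(y)`. Its second derivative is
`(M₂ M₀ - M₁²) / M₀²` with `Mₖ(ρ) = ∑ᵢ aᵢ cᵢ^k exp (ρ cᵢ)`, and at `ρ = 0` we have `M₀ = 1`,
so it is the variance of the information density.
-/

open Real Finset

noncomputable section

section ExpMoment

variable {ι : Type*} [Fintype ι] (a c : ι → ℝ)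

def expMoment (k : ℕ) (ρ : ℝ) : ℝ := ∑ i, a i * c i ^ k * exp (ρ * c i)

theorem hasDerivAt_expMoment (k : ℕ) (ρ : ℝ) :
    HasDerivAt (expMoment a c k) (expMoment a c (k + 1) ρ) ρ := by
  have h : HasDerivAt (expMoment a c k)
      (∑ i, a i * c i ^ k * (exp (ρ * c i) * (1 * c i))) ρ :=
    HasDerivAt.fun_sum fun i _ =>
      (((hasDerivAt_id ρ).mul_const (c i)).exp).const_mul (a i * c i ^ k)
  convert h using 1
  exact Finset.sum_congr rfl fun i _ => by ring

theorem expMoment_at_zero (k : ℕ) : expMoment a c k 0 = ∑ i, a i * c i ^ k := by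
  simp [expMoment]

variable {a}

theorem expMoment_zero_pos (ha : ∀ i, 0 ≤ a i) (hsum : 0 < ∑ i, a i) (ρ : ℝ) :
    0 < expMoment a c 0 ρ := by
  obtain ⟨i, -, hi⟩ := exists_ne_zero_of_sum_ne_zero hsum.ne'
  refine sum_pos' (fun j _ => by have := ha j; positivity) ⟨i, mem_univ i, ?_⟩
  simpa using mul_pos ((ha i).lt_of_ne' hi) (exp_pos (ρ * c i))

theorem hasDerivAt_log_expMoment (ha : ∀ i, 0 ≤ a i) (hsum : 0 < ∑ i, a i) (ρ : ℝ) :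
    HasDerivAt (fun ρ => log (expMoment a c 0 ρ))
      (expMoment a c 1 ρ / expMoment a c 0 ρ) ρ :=
  (hasDerivAt_expMoment a c 0 ρ).log (expMoment_zero_pos c ha hsum ρ).ne'

theorem deriv_log_expMoment (ha : ∀ i, 0 ≤ a i) (hsum : 0 < ∑ i, a i) :
    deriv (fun ρ => log (expMoment a c 0 ρ)) =
      fun ρ => expMoment a c 1 ρ / expMoment a c 0 ρ :=
  funext fun ρ => (hasDerivAt_log_expMoment c ha hsum ρ).deriv

theorem hasDerivAt_deriv_log_expMoment (ha : ∀ i, 0 ≤ a i) (hsum : 0 < ∑ i, a i) (ρ : ℝ) :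
    HasDerivAt (deriv fun ρ => log (expMoment a c 0 ρ))
      ((expMoment a c 2 ρ * expMoment a c 0 ρ - expMoment a c 1 ρ ^ 2) /
        expMoment a c 0 ρ ^ 2) ρ := by
  rw [deriv_log_expMoment c ha hsum]
  exact ((hasDerivAt_expMoment a c 1 ρ).fun_div (hasDerivAt_expMoment a c 0 ρ)
    (expMoment_zero_pos c ha hsum ρ).ne').congr_deriv (by rw [zero_add, one_add_one_eq_two]; ring)

end ExpMoment

theorem rpow_one_add_mul_rpow_neg {w q : ℝ} (hw : 0 < w) (hq : 0 < q) (ρ : ℝ) :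
    w ^ (1 + ρ) * q ^ (-ρ) = w * exp (ρ * log (w / q)) := by
  rw [rpow_def_of_pos hw, rpow_def_of_pos hq, log_div hw.ne' hq.ne', ← exp_add,
    show log w * (1 + ρ) + log q * -ρ = log w + ρ * (log w - log q) by ring, exp_add, exp_log hw]

theorem sum_mul_sum_eq_sum_prod {X Y : Type*} [Fintype X] [Fintype Y]
    (p : X → ℝ) (W F : X → Y → ℝ) :
    ∑ x, p x * ∑ y, W x y * F x y = ∑ i : X × Y, p i.1 * W i.1 i.2 * F i.1 i.2 := by
  simp only [Fintype.sum_prod_type, mul_sum, mul_assoc]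

/-- Lemma 3 of the paper: second derivative at 0 of the
Gallager-type function ψ(ρ | W, p). -/
theorem stmt_17 {X Y : Type*} [Fintype X] [Fintype Y]
    (p : X → ℝ) (W : X → Y → ℝ)
    (hp : ∀ x, 0 < p x) (hpsum : ∑ x, p x = 1)
    (hW : ∀ x y, 0 < W x y) (hWsum : ∀ x, ∑ y, W x y = 1)
    (q : Y → ℝ) (hq : ∀ y, q y = ∑ x, p x * W x y)
    (ψ : ℝ → ℝ)
    (hψ : ∀ ρ : ℝ, ψ ρ =
      Real.log (∑ x, p x * ∑ y, W x y ^ (1 + ρ) * q y ^ (-ρ))) :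
    DifferentiableAt ℝ ψ 0 ∧ DifferentiableAt ℝ (deriv ψ) 0 ∧
      deriv (deriv ψ) 0 =
        (∑ x, p x * ∑ y, W x y * Real.log (W x y / q y) ^ 2) -
          (∑ x, p x * ∑ y, W x y * Real.log (W x y / q y)) ^ 2 := by
  set a : X × Y → ℝ := fun i => p i.1 * W i.1 i.2
  set c : X × Y → ℝ := fun i => log (W i.1 i.2 / q i.2)
  have ha : ∀ i, 0 ≤ a i := fun i => (mul_pos (hp i.1) (hW i.1 i.2)).le
  have hasum : ∑ i, a i = 1 := by
    simpa [hWsum, hpsum] using (sum_mul_sum_eq_sum_prod p W fun _ _ => 1).symm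
  have hqpos : ∀ y, 0 < q y := by
    have : Nonempty X := by
      by_contra h
      simp [not_nonempty_iff.mp h] at hpsum
    exact fun y => hq y ▸ sum_pos (fun x _ => mul_pos (hp x) (hW x y)) univ_nonempty
  have hψa : ψ = fun ρ => log (expMoment a c 0 ρ) := funext fun ρ => by
    simp only [hψ, rpow_one_add_mul_rpow_neg (hW _ _) (hqpos _), sum_mul_sum_eq_sum_prod,
      expMoment, pow_zero, mul_one, a, c]
  have hM : ∀ k : ℕ, expMoment a c k 0 = ∑ x, p x * ∑ y, W x y * log (W x y / q y) ^ k :=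
    fun k => by rw [expMoment_at_zero, sum_mul_sum_eq_sum_prod]
  have hapos : 0 < ∑ i, a i := hasum ▸ one_pos
  have hψ'' := hasDerivAt_deriv_log_expMoment c ha hapos 0
  rw [← hψa] at hψ''
  refine ⟨hψa ▸ (hasDerivAt_log_expMoment c ha hapos 0).differentiableAt,
    hψ''.differentiableAt, ?_⟩
  rw [hψ''.deriv, expMoment_at_zero a c 0]
  simp only [pow_zero, mul_one, hasum, hM, pow_one]
  ring
end
end

section
/- Let p be a prime, let X = 𝔽_p (viewed as a finite abelian group), let Y be a finite set, and let W be a regular channel from X to Y: there is an action of X on Y by permutations (π_x)_{x∈X} with π_x ∘ π_{x'} = π_{x+x'} for all x, x' ∈ X, and a probability distribution q on Y with W(y|x) = q(π_x(y)) for all x, y. Let I denote the mutual information I(X;Y) between a uniform input X on 𝔽_p and the channel output, and fix a rate R > I. For each n, set k_n = ⌈nR/log p⌉, let F_n be a uniformly random linear map from 𝔽_p^{k_n} to 𝔽_p^n, and consider the output distribution P_n on Yⁿ of the n-fold memoryless channel Wⁿ applied to F_n(M) with M uniform on 𝔽_p^{k_n}, and the output distribution Q_n of Wⁿ applied to a uniform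 input on 𝔽_p^n. Then there exist constants ρ̄ ∈ (0,1] and δ > 0 such that for all sufficiently large n, E_{F_n}[ D(P_n ‖ Q_n) ] ≤ (1/ρ̄)·e^{−n ρ̄ δ}; in particular the expected KL divergence tends to 0 exponentially fast as n → ∞. -/
noncomputable section



/-- Two-sequence finite Hölder inequality. -/
lemma my_hoelder {ι : Type*} (t : Finset ι) (u v : ι → ℝ)
    (hu : ∀ i ∈ t, 0 ≤ u i) (hv : ∀ i ∈ t, 0 ≤ v i)
    {θ : ℝ} (h0 : 0 < θ) (h1 : θ < 1) :
    ∑ i ∈ t, u i ^ θ * v i ^ (1 - θ) ≤ (∑ i ∈ t, u i) ^ θ * (∑ i ∈ t, v i) ^ (1 - θ) := by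
  set U := ∑ i ∈ t, u i with hU
  set V := ∑ i ∈ t, v i with hV
  have hUnn : 0 ≤ U := Finset.sum_nonneg hu
  have hVnn : 0 ≤ V := Finset.sum_nonneg hv
  rcases eq_or_lt_of_le hUnn with hU0 | hUpos
  · have : ∀ i ∈ t, u i = 0 := by
      intro i hi
      have := (Finset.sum_eq_zero_iff_of_nonneg hu).mp hU0.symm
      exact this i hi
    have hL : ∑ i ∈ t, u i ^ θ * v i ^ (1 - θ) = 0 := by
      apply Finset.sum_eq_zero
      intro i hi
      rw [this i hi, Real.zero_rpow (ne_of_gt h0), zero_mul]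
    rw [hL, ← hU0, Real.zero_rpow (ne_of_gt h0), zero_mul]
  rcases eq_or_lt_of_le hVnn with hV0 | hVpos
  · have : ∀ i ∈ t, v i = 0 := by
      intro i hi
      have := (Finset.sum_eq_zero_iff_of_nonneg hv).mp hV0.symm
      exact this i hi
    have hL : ∑ i ∈ t, u i ^ θ * v i ^ (1 - θ) = 0 := by
      apply Finset.sum_eq_zero
      intro i hi
      rw [this i hi, Real.zero_rpow (by linarith), mul_zero]
    rw [hL, ← hV0, Real.zero_rpow (by linarith), mul_zero]
  have key : ∀ i ∈ t, u i ^ θ * v i ^ (1 - θ) ≤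
      U ^ θ * V ^ (1 - θ) * (θ * (u i / U) + (1 - θ) * (v i / V)) := by
    intro i hi
    have h2 : u i ^ θ * v i ^ (1 - θ) =
        U ^ θ * V ^ (1 - θ) * ((u i / U) ^ θ * (v i / V) ^ (1 - θ)) := by
      rw [Real.div_rpow (hu i hi) hUnn θ, Real.div_rpow (hv i hi) hVnn (1-θ)]
      field_simp
    rw [h2]
    apply mul_le_mul_of_nonneg_left _ (by positivity)
    exact Real.geom_mean_le_arith_mean2_weighted (le_of_lt h0) (by linarith)
      (div_nonneg (hu i hi) hUnn) (div_nonneg (hv i hi) hVnn) (by ring)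
  calc ∑ i ∈ t, u i ^ θ * v i ^ (1 - θ)
      ≤ ∑ i ∈ t, U ^ θ * V ^ (1 - θ) * (θ * (u i / U) + (1 - θ) * (v i / V)) :=
        Finset.sum_le_sum key
    _ = U ^ θ * V ^ (1 - θ) := by
        rw [← Finset.mul_sum]
        have : ∑ i ∈ t, (θ * (u i / U) + (1 - θ) * (v i / V)) = 1 := by
          rw [Finset.sum_add_distrib, ← Finset.mul_sum, ← Finset.mul_sum,
            ← Finset.sum_div, ← Finset.sum_div, ← hU, ← hV,
            div_self (ne_of_gt hUpos), div_self (ne_of_gt hVpos)]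
          ring
        rw [this, mul_one]

/-- Jensen for `rpow` with exponent in (0,1): weighted power mean. -/
lemma my_jensen_rpow {ι : Type*} (t : Finset ι) (w a : ι → ℝ)
    (hw : ∀ i ∈ t, 0 ≤ w i) (ha : ∀ i ∈ t, 0 ≤ a i) (hw1 : ∑ i ∈ t, w i = 1)
    {s : ℝ} (h0 : 0 < s) (h1 : s < 1) :
    ∑ i ∈ t, w i * a i ^ s ≤ (∑ i ∈ t, w i * a i) ^ s := by
  have := my_hoelder t (fun i => w i * a i) w
    (fun i hi => mul_nonneg (hw i hi) (ha i hi)) hw h0 h1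
  rw [hw1, Real.one_rpow, mul_one] at this
  refine le_trans (le_of_eq ?_) this
  apply Finset.sum_congr rfl
  intro i hi
  rw [Real.mul_rpow (hw i hi) (ha i hi)]
  rcases eq_or_lt_of_le (hw i hi) with h | h
  · rw [← h]
    simp [Real.zero_rpow (ne_of_gt h0)]
  · have : w i ^ s * w i ^ (1 - s) = w i := by
      rw [← Real.rpow_add h, add_sub_cancel, Real.rpow_one]
    calc w i * a i ^ s = w i ^ s * w i ^ (1-s) * a i ^ s := by rw [this]
      _ = w i ^ s * a i ^ s * w i ^ (1-s) := by ring

/-- Subadditivity of `rpow` over a finite sum, exponent in (0,1). -/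
lemma my_rpow_sum_le {ι : Type*} (t : Finset ι) (a : ι → ℝ)
    (ha : ∀ i ∈ t, 0 ≤ a i) {s : ℝ} (h0 : 0 < s) (h1 : s < 1) :
    (∑ i ∈ t, a i) ^ s ≤ ∑ i ∈ t, a i ^ s := by
  set S := ∑ i ∈ t, a i with hS
  have hSnn : 0 ≤ S := Finset.sum_nonneg ha
  rcases eq_or_lt_of_le hSnn with h | hSpos
  · rw [← h, Real.zero_rpow (ne_of_gt h0)]
    exact Finset.sum_nonneg fun i hi => Real.rpow_nonneg (ha i hi) s
  have key : ∀ i ∈ t, a i / S ≤ (a i / S) ^ s := by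
    intro i hi
    rcases eq_or_lt_of_le (ha i hi) with h | h
    · rw [← h, zero_div, Real.zero_rpow (ne_of_gt h0)]
    · have h2 : a i / S ≤ 1 := by
        rw [div_le_one hSpos]
        exact Finset.single_le_sum ha hi
      calc a i / S = (a i / S) ^ (1:ℝ) := (Real.rpow_one _).symm
        _ ≤ (a i / S) ^ s := Real.rpow_le_rpow_of_exponent_ge (by positivity) h2 (le_of_lt h1)
  have h3 : (1:ℝ) ≤ ∑ i ∈ t, (a i / S) ^ s := by
    calc (1:ℝ) = ∑ i ∈ t, a i / S := by rw [← Finset.sum_div, ← hS, div_self (ne_of_gt hSpos)]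
      _ ≤ _ := Finset.sum_le_sum key
  have h4 : ∑ i ∈ t, (a i / S) ^ s = (∑ i ∈ t, a i ^ s) / S ^ s := by
    rw [Finset.sum_div]
    exact Finset.sum_congr rfl fun i hi => Real.div_rpow (ha i hi) hSnn s
  rw [h4] at h3
  have := mul_le_mul_of_nonneg_left h3 (le_of_lt (Real.rpow_pos_of_pos hSpos s))
  rw [mul_one, mul_div_cancel₀ _ (ne_of_gt (Real.rpow_pos_of_pos hSpos s))] at this
  exact this

/-- Jensen's inequality for the logarithm. -/
lemma my_jensen_log {ι : Type*} (t : Finset ι) (w r : ι → ℝ)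
    (hw : ∀ i ∈ t, 0 ≤ w i) (hw1 : ∑ i ∈ t, w i = 1)
    (hr : ∀ i ∈ t, 0 ≤ r i) (hpos : ∀ i ∈ t, 0 < w i → 0 < r i) :
    ∑ i ∈ t, w i * Real.log (r i) ≤ Real.log (∑ i ∈ t, w i * r i) := by
  set c := ∑ i ∈ t, w i * r i with hc
  have hcpos : 0 < c := by
    have : ∃ i ∈ t, w i ≠ 0 := by
      by_contra h
      push_neg at h
      rw [Finset.sum_eq_zero h] at hw1
      norm_num at hw1
    obtain ⟨i, hi, hwi⟩ := this
    have hwi' : 0 < w i := lt_of_le_of_ne (hw i hi) (Ne.symm hwi)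
    have : 0 < w i * r i := mul_pos hwi' (hpos i hi hwi')
    exact lt_of_lt_of_le this (Finset.single_le_sum (f := fun j => w j * r j)
      (fun j hj => mul_nonneg (hw j hj) (hr j hj)) hi)
  have key : ∀ i ∈ t, w i * Real.log (r i) ≤ w i * (Real.log c + r i / c - 1) := by
    intro i hi
    rcases eq_or_lt_of_le (hw i hi) with h | h
    · rw [← h, zero_mul, zero_mul]
    · apply mul_le_mul_of_nonneg_left _ (le_of_lt h)
      have hri : 0 < r i := hpos i hi h
      have := Real.log_le_sub_one_of_pos (div_pos hri hcpos)
      rw [Real.log_div (ne_of_gt hri) (ne_of_gt hcpos)] at this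
      linarith
  calc ∑ i ∈ t, w i * Real.log (r i) ≤ ∑ i ∈ t, w i * (Real.log c + r i / c - 1) :=
        Finset.sum_le_sum key
    _ = Real.log c := by
        have : ∀ i ∈ t, w i * (Real.log c + r i / c - 1)
            = w i * (Real.log c - 1) + (w i * r i) / c := by
          intro i _; ring
        rw [Finset.sum_congr rfl this, Finset.sum_add_distrib, ← Finset.sum_mul,
          ← Finset.sum_div, hw1, ← hc, one_mul, div_self (ne_of_gt hcpos) ]
        ring

/-- Sum over a finite group of `f ∘ φ` for a surjective hom. -/
lemma my_sum_surj_hom {G H : Type*} [AddGroup G] [Fintype G] [AddGroup H] [Fintype H]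
    [DecidableEq H] (φ : G →+ H) (hφ : Function.Surjective φ) (f : H → ℝ) :
    (Fintype.card H : ℝ) * ∑ a : G, f (φ a) = (Fintype.card G : ℝ) * ∑ h : H, f h := by
  classical
  have hfib : ∀ h : H, (Finset.univ.filter (fun a : G => φ a = h)).card
      = (Finset.univ.filter (fun a : G => φ a = 0)).card := by
    intro h
    obtain ⟨a0, ha0⟩ := hφ h
    apply Finset.card_bij (fun a _ => a - a0)
    · intro a ha
      simp only [Finset.mem_filter, Finset.mem_univ, true_and] at ha ⊢
      rw [map_sub, ha, ha0, sub_self]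
    · intro a ha b hb hab
      exact by simpa using hab
    · intro b hb
      simp only [Finset.mem_filter, Finset.mem_univ, true_and] at hb ⊢
      refine ⟨b + a0, ?_, by simp⟩
      rw [map_add, hb, ha0, zero_add]
  set c := (Finset.univ.filter (fun a : G => φ a = 0)).card with hcdef
  have hsum : ∀ g : H → ℝ, ∑ a : G, g (φ a) = ∑ h : H, (c : ℝ) * g h := by
    intro g
    have h1 : ∀ a : G, g (φ a) = ∑ h : H, if φ a = h then g h else 0 := by
      intro a
      rw [Finset.sum_ite_eq]
      simp
    calc ∑ a : G, g (φ a) = ∑ a : G, ∑ h : H, if φ a = h then g h else 0 :=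
          Finset.sum_congr rfl fun a _ => h1 a
      _ = ∑ h : H, ∑ a : G, if φ a = h then g h else 0 := Finset.sum_comm
      _ = ∑ h : H, (c : ℝ) * g h := by
          apply Finset.sum_congr rfl
          intro h _
          rw [← Finset.sum_filter, Finset.sum_const, hfib h, nsmul_eq_mul]
  have hcard : (Fintype.card G : ℝ) = (Fintype.card H : ℝ) * c := by
    have := hsum (fun _ => (1:ℝ))
    simp only [Finset.sum_const, Finset.card_univ, nsmul_eq_mul, mul_one] at this
    rw [this]
  rw [hsum f, ← Finset.mul_sum, hcard]
  ring

lemma my_rpow_add_le {a b : ℝ} (ha : 0 ≤ a) (hb : 0 ≤ b) {s : ℝ} (h0 : 0 < s) (h1 : s < 1) :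
    (a + b) ^ s ≤ a ^ s + b ^ s := by
  have := my_rpow_sum_le Finset.univ (fun t : Bool => if t then a else b)
    (fun t _ => by cases t <;> simp [ha, hb]) h0 h1
  simpa [Fintype.sum_bool] using this





lemma my_sum_prod {Y : Type*} [Fintype Y] (n : ℕ) (G : Fin n → Y → ℝ) :
    ∑ y : Fin n → Y, ∏ i, G i (y i) = ∏ i, ∑ z, G i z := by
  classical
  rw [Finset.prod_univ_sum]
  rw [Fintype.piFinset_univ]

lemma my_factorize {Z Y : Type*} [Fintype Z] [Fintype Y] (n : ℕ) (F : Z → Y → ℝ) :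
    ∑ v : Fin n → Z, ∑ y : Fin n → Y, ∏ i, F (v i) (y i) = (∑ x : Z, ∑ z : Y, F x z) ^ n := by
  classical
  have h1 : ∀ v : Fin n → Z, ∑ y : Fin n → Y, ∏ i, F (v i) (y i) = ∏ i, ∑ z, F (v i) z :=
    fun v => my_sum_prod n (fun i => F (v i))
  rw [Finset.sum_congr rfl (fun v _ => h1 v), my_sum_prod n (fun _ x => ∑ z, F x z),
    Finset.prod_const, Finset.card_univ, Fintype.card_fin]





/-- Solvability of a triangular 2x2 system for linearly independent rows. -/
lemma my_row_lemma {p : ℕ} (hp : p.Prime) {kk : ℕ} (m m' : Fin kk → ZMod p)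
    (hm : m ≠ 0) (hind : ∀ c : ZMod p, m' ≠ c • m) (v w : ZMod p) :
    ∃ a : Fin kk → ZMod p, (∑ j, a j * m j = v) ∧ (∑ j, a j * m' j = w) := by
  haveI := Fact.mk hp
  classical
  obtain ⟨j, hj⟩ : ∃ j, m j ≠ 0 := by
    by_contra h
    push_neg at h
    exact hm (funext h)
  set c₀ : ZMod p := m' j * (m j)⁻¹ with hc₀
  set m'' : Fin kk → ZMod p := m' - c₀ • m with hm''
  have hm''j : m'' j = 0 := by
    simp only [hm'', Pi.sub_apply, Pi.smul_apply, smul_eq_mul, hc₀]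
    field_simp
    simp
  have hm''ne : m'' ≠ 0 := by
    intro h
    apply hind c₀
    have : m' - c₀ • m = 0 := h
    rw [sub_eq_zero] at this
    exact this
  obtain ⟨j', hj'⟩ : ∃ j', m'' j' ≠ 0 := by
    by_contra h
    push_neg at h
    exact hm''ne (funext h)
  have hjj' : j' ≠ j := fun h => hj' (h ▸ hm''j)
  set β : ZMod p := (w - c₀ * v) * (m'' j')⁻¹ with hβ
  set α : ZMod p := (v - β * m j') * (m j)⁻¹ with hα
  refine ⟨fun j₂ => (if j₂ = j then α else 0) + (if j₂ = j' then β else 0), ?_, ?_⟩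
  · have : ∀ g : Fin kk → ZMod p,
        ∑ j₂, ((if j₂ = j then α else 0) + (if j₂ = j' then β else 0)) * g j₂
        = α * g j + β * g j' := by
      intro g
      rw [Finset.sum_congr rfl (fun j₂ _ => add_mul _ _ _), Finset.sum_add_distrib]
      congr 1
      · rw [Finset.sum_congr rfl (fun j₂ _ => ite_mul _ _ _ _)]
        simp [Finset.sum_ite_eq']
      · rw [Finset.sum_congr rfl (fun j₂ _ => ite_mul _ _ _ _)]
        simp [Finset.sum_ite_eq']
    rw [this m, hα]
    field_simp
    ring
  · have : ∀ g : Fin kk → ZMod p,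
        ∑ j₂, ((if j₂ = j then α else 0) + (if j₂ = j' then β else 0)) * g j₂
        = α * g j + β * g j' := by
      intro g
      rw [Finset.sum_congr rfl (fun j₂ _ => add_mul _ _ _), Finset.sum_add_distrib]
      congr 1
      · rw [Finset.sum_congr rfl (fun j₂ _ => ite_mul _ _ _ _)]
        simp [Finset.sum_ite_eq']
      · rw [Finset.sum_congr rfl (fun j₂ _ => ite_mul _ _ _ _)]
        simp [Finset.sum_ite_eq']
    rw [this m']
    have h1 : m' j = c₀ * m j := by
      rw [hc₀]
      field_simp
    have h2 : m' j' = m'' j' + c₀ * m j' := by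
      simp [hm'']
    have h3 : α * m j + β * m j' = v := by
      rw [hα]; field_simp; ring
    have h4 : β * m'' j' = w - c₀ * v := by
      rw [hβ]; field_simp
    calc α * m' j + β * m' j' = c₀ * (α * m j + β * m j') + β * m'' j' := by
          rw [h1, h2]; ring
      _ = w := by rw [h3, h4]; ring

/-- Surjectivity of `A ↦ A.mulVec m` for `m ≠ 0`. -/
lemma my_surj_one {p : ℕ} (hp : p.Prime) [NeZero p] {n kk : ℕ} (m : Fin kk → ZMod p)
    (hm : m ≠ 0) :
    Function.Surjective (fun A : Matrix (Fin n) (Fin kk) (ZMod p) => A.mulVec m) := by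
  haveI := Fact.mk hp
  classical
  obtain ⟨j, hj⟩ : ∃ j, m j ≠ 0 := by
    by_contra h
    push_neg at h
    exact hm (funext h)
  intro v
  refine ⟨fun i j₂ => if j₂ = j then v i * (m j)⁻¹ else 0, ?_⟩
  funext i
  simp only [Matrix.mulVec, dotProduct]
  rw [Finset.sum_congr rfl (fun j₂ _ => ite_mul _ _ _ _)]
  simp only [Finset.sum_ite_eq', Finset.mem_univ, if_true, zero_mul]
  field_simp

/-- Joint surjectivity of `A ↦ (A.mulVec m, A.mulVec m')` for independent `m, m'`. -/
lemma my_surj_two {p : ℕ} (hp : p.Prime) [NeZero p] {n kk : ℕ} (m m' : Fin kk → ZMod p)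
    (hm : m ≠ 0) (hind : ∀ c : ZMod p, m' ≠ c • m) :
    Function.Surjective (fun A : Matrix (Fin n) (Fin kk) (ZMod p) =>
      (A.mulVec m, A.mulVec m')) := by
  classical
  rintro ⟨v, w⟩
  have h := fun i : Fin n => my_row_lemma hp m m' hm hind (v i) (w i)
  choose a ha1 ha2 using h
  refine ⟨fun i => a i, ?_⟩
  simp only [Prod.mk.injEq]
  constructor
  · funext i
    simpa [Matrix.mulVec, dotProduct] using ha1 i
  · funext i
    simpa [Matrix.mulVec, dotProduct] using ha2 i





lemma my_choose_s {Y : Type*} [Fintype Y] (q out : Y → ℝ) (I R : ℝ)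
    (hq1 : ∑ y, q y = 1)
    (hI : I = ∑ y, q y * Real.log (q y / out y)) (hR : I < R) :
    ∃ s : ℝ, 0 < s ∧ s < 1 ∧
      Real.log (∑ y, q y * Real.exp (s * Real.log (q y / out y))) < s * R := by
  classical
  set L : Y → ℝ := fun y => Real.log (q y / out y) with hL
  set Φ : ℝ → ℝ := fun s => ∑ y, q y * Real.exp (s * L y) with hΦ
  have hΦ0 : Φ 0 = 1 := by
    simp only [hΦ, zero_mul, Real.exp_zero, mul_one]
    exact hq1
  have hderiv : HasDerivAt Φ I 0 := by
    have h1 : ∀ y ∈ Finset.univ (α := Y),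
        HasDerivAt (fun s : ℝ => q y * Real.exp (s * L y))
          (q y * (Real.exp ((0:ℝ) * L y) * (1 * L y))) 0 := by
      intro y _
      exact (((hasDerivAt_id (0:ℝ)).mul_const (L y)).exp).const_mul (q y)
    have h2 := HasDerivAt.sum h1
    have h3 : ∑ y, q y * (Real.exp ((0:ℝ) * L y) * (1 * L y)) = I := by
      rw [hI]
      apply Finset.sum_congr rfl
      intro y _
      simp [hL]
    rw [h3] at h2
    have e : Φ = ∑ i, (fun s => q i * Real.exp (s * L i)) := by
      ext s
      simp [hΦ, Finset.sum_apply]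
    rw [e]
    exact h2
  have hlog : HasDerivAt (fun s => Real.log (Φ s)) I 0 := by
    have := hderiv.log (by rw [hΦ0]; norm_num)
    rw [hΦ0] at this
    simpa using this
  have hslope := hasDerivAt_iff_tendsto_slope.mp hlog
  have hslope' : Filter.Tendsto (fun s => Real.log (Φ s) / s) (nhdsWithin 0 (Set.Ioi 0))
      (nhds I) := by
    have hmono : nhdsWithin (0:ℝ) (Set.Ioi 0) ≤ nhdsWithin 0 {(0:ℝ)}ᶜ := by
      apply nhdsWithin_mono
      intro x hx
      exact ne_of_gt hx
    have := hslope.mono_left hmono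
    refine this.congr ?_
    intro s
    rw [slope_def_field]
    rw [show Real.log (Φ 0) = 0 by rw [hΦ0]; exact Real.log_one]
    simp [div_eq_mul_inv]
  have hev1 : ∀ᶠ s in nhdsWithin (0:ℝ) (Set.Ioi 0), Real.log (Φ s) / s < R :=
    hslope'.eventually_lt_const hR
  have hev2 : ∀ᶠ s in nhdsWithin (0:ℝ) (Set.Ioi 0), s ∈ Set.Ioo (0:ℝ) 1 :=
    Filter.eventually_of_mem (Ioo_mem_nhdsGT one_pos) (fun s hs => hs)
  obtain ⟨s, hs1, hs2⟩ := (hev1.and hev2).exists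
  refine ⟨s, hs2.1, hs2.2, ?_⟩
  have := (div_lt_iff₀ hs2.1).mp hs1
  calc Real.log (Φ s) < R * s := this
    _ = s * R := by ring






lemma my_n_bound {p : ℕ} (hp : p.Prime) [NeZero p] {Y : Type*} [Fintype Y]
    (π : ZMod p → Y → Y) (hbij : ∀ x, Function.Bijective (π x))
    (hact : ∀ x x' y, π x (π x' y) = π (x + x') y)
    (q : Y → ℝ) (hq0 : ∀ y, 0 ≤ q y) (hq1 : ∑ y, q y = 1)
    (out : Y → ℝ) (hout : ∀ y, out y = ∑ x : ZMod p, (1 / p : ℝ) * q (π x y))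
    {s : ℝ} (hs0 : 0 < s) (hs1 : s < 1)
    (φs : ℝ) (hφs : φs = ∑ y, q y * (q y / out y) ^ s)
    (n kk : ℕ)
    (V : (Fin n → ZMod p) → (Fin n → Y) → ℝ)
    (hV : ∀ v y, V v y = ∏ i, q (π (v i) (y i)))
    (Pf : Matrix (Fin n) (Fin kk) (ZMod p) → (Fin n → Y) → ℝ)
    (hPf : ∀ A y, Pf A y = ∑ m : Fin kk → ZMod p, (1 / (p : ℝ) ^ kk) * V (A.mulVec m) y)
    (Qf : (Fin n → Y) → ℝ) (hQf : ∀ y, Qf y = ∏ i, out (y i)) :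
    (∑ A : Matrix (Fin n) (Fin kk) (ZMod p), ∑ y : Fin n → Y,
      Pf A y * Real.log (Pf A y / Qf y)) /
      (Fintype.card (Matrix (Fin n) (Fin kk) (ZMod p)) : ℝ)
    ≤ s⁻¹ * ((p : ℝ) * ((p : ℝ) ^ kk) ^ (-s) * φs ^ n) := by
  classical
  haveI := Fact.mk hp
  -- basic positivity
  have hp0R : (0 : ℝ) < p := by exact_mod_cast hp.pos
  have hπ0 : ∀ z : Y, π 0 z = z := by
    intro z
    apply (hbij 0).1
    rw [hact 0 0 z, add_zero]
  have hq1x : ∀ x : ZMod p, ∑ z, q (π x z) = 1 := by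
    intro x
    rw [Fintype.sum_bijective (π x) (hbij x) _ q (fun z => rfl)]
    exact hq1
  have out_nn : ∀ z, 0 ≤ out z := by
    intro z
    rw [hout]
    exact Finset.sum_nonneg fun x _ => mul_nonneg (by positivity) (hq0 _)
  have out_inv : ∀ (x : ZMod p) (z : Y), out (π x z) = out z := by
    intro x z
    rw [hout (π x z), hout z]
    rw [Fintype.sum_equiv (Equiv.addRight x) _ (fun w => (1 / p : ℝ) * q (π w z))]
    intro w
    rw [hact w x z]
    rfl
  have sum_out : ∑ z, out z = 1 := by
    rw [Finset.sum_congr rfl fun z _ => hout z, Finset.sum_comm]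
    rw [Finset.sum_congr rfl fun x (_ : x ∈ Finset.univ) => (Finset.mul_sum _ _ _).symm]
    rw [Finset.sum_congr rfl fun x (_ : x ∈ Finset.univ) => by rw [hq1x x, mul_one]]
    rw [Finset.sum_const, Finset.card_univ, ZMod.card, nsmul_eq_mul]
    field_simp
  have sumqx : ∀ z : Y, ∑ x : ZMod p, q (π x z) = p * out z := by
    intro z
    rw [hout]
    rw [← Finset.mul_sum]
    rw [Finset.sum_congr rfl fun x _ => rfl]
    field_simp
  have q_le : ∀ (x : ZMod p) (z : Y), q (π x z) ≤ p * out z := by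
    intro x z
    rw [← sumqx z]
    exact Finset.single_le_sum (f := fun x => q (π x z)) (fun x _ => hq0 _)
      (Finset.mem_univ x)
  have q_le0 : ∀ z, q z ≤ p * out z := by
    intro z
    have := q_le 0 z
    rwa [hπ0] at this
  have q_out_pos : ∀ z, 0 < q z → 0 < out z := by
    intro z hz
    by_contra h
    push_neg at h
    have h0 : out z = 0 := le_antisymm h (out_nn z)
    have := q_le0 z
    rw [h0, mul_zero] at this
    linarith
  have hφnn : 0 ≤ φs := by
    rw [hφs]
    exact Finset.sum_nonneg fun z _ => mul_nonneg (hq0 z) (Real.rpow_nonneg (div_nonneg (hq0 z) (out_nn z)) s)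
  -- φs ≥ 1
  have hφ1 : (1 : ℝ) ≤ φs := by
    set θ : ℝ := 1 / (1 + s) with hθ
    have hs1' : (0:ℝ) < 1 + s := by linarith
    have hθ0 : 0 < θ := by rw [hθ]; positivity
    have hθ1 : θ < 1 := by
      rw [hθ, div_lt_one hs1']
      linarith
    have key : ∀ z ∈ Finset.univ (α := Y),
        (q z * (q z / out z) ^ s) ^ θ * (out z) ^ (1 - θ) = q z := by
      intro z _
      by_cases hz : q z = 0
      · rw [hz]
        simp [Real.zero_rpow (ne_of_gt hθ0)]
      · have hqz : 0 < q z := lt_of_le_of_ne (hq0 z) (Ne.symm hz)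
        have hoz : 0 < out z := q_out_pos z hqz
        have e1 : (1 + s) * θ = 1 := by
          rw [hθ]; field_simp
        have e4 : s * θ = 1 - θ := by nlinarith [e1]
        have h1 : q z * (q z / out z) ^ s = q z ^ (1 + s) / out z ^ s := by
          rw [Real.div_rpow (le_of_lt hqz) (le_of_lt hoz), Real.rpow_add hqz, Real.rpow_one]
          ring
        rw [h1, Real.div_rpow (Real.rpow_nonneg (le_of_lt hqz) _)
            (Real.rpow_nonneg (le_of_lt hoz) _),
          ← Real.rpow_mul (le_of_lt hqz), ← Real.rpow_mul (le_of_lt hoz), e1, Real.rpow_one,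
          e4, div_mul_cancel₀ _ (ne_of_gt (Real.rpow_pos_of_pos hoz _))]
    have h := my_hoelder Finset.univ (fun z => q z * (q z / out z) ^ s) out
      (fun z _ => mul_nonneg (hq0 z) (Real.rpow_nonneg (div_nonneg (hq0 z) (out_nn z)) s))
      (fun z _ => out_nn z) hθ0 hθ1
    rw [sum_out] at h
    rw [Finset.sum_congr rfl key, hq1, ← hφs, Real.one_rpow, mul_one] at h
    by_contra hcon
    push_neg at hcon
    have := Real.rpow_lt_one hφnn hcon hθ0
    linarith
  -- per-coordinate bound
  have hg : ∀ lam : ZMod p,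
      (∑ x : ZMod p, ∑ z : Y, (p : ℝ)⁻¹ * (q (π x z) * (q (π (lam * x) z) / out z) ^ s)) ≤ φs := by
    intro lam
    by_cases hlam : lam = 1
    · subst hlam
      have e : ∀ x : ZMod p, ∑ z, (p : ℝ)⁻¹ * (q (π x z) * (q (π (1 * x) z) / out z) ^ s)
          = (p : ℝ)⁻¹ * φs := by
        intro x
        rw [← Finset.mul_sum]
        congr 1
        rw [hφs]
        refine Fintype.sum_bijective (π x) (hbij x) _ _ ?_
        intro z
        rw [one_mul, out_inv x z]
      rw [Finset.sum_congr rfl fun x _ => e x, Finset.sum_const, Finset.card_univ, ZMod.card,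
        nsmul_eq_mul]
      rw [show (p:ℝ) * ((p:ℝ)⁻¹ * φs) = φs by field_simp]
    · have hlam0 : lam - 1 ≠ 0 := sub_ne_zero.mpr hlam
      have e1 : ∀ (x : ZMod p) (z : Y), q (π (lam * x) z) = q (π ((lam - 1) * x) (π x z)) := by
        intro x z
        rw [hact ((lam - 1) * x) x z]
        congr 2
        ring
      have e2 : ∀ x : ZMod p,
          ∑ z, (p : ℝ)⁻¹ * (q (π x z) * (q (π (lam * x) z) / out z) ^ s)
          = ∑ u, (p : ℝ)⁻¹ * (q u * (q (π ((lam - 1) * x) u) / out u) ^ s) := by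
        intro x
        refine Fintype.sum_bijective (π x) (hbij x) _ _ ?_
        intro z
        rw [e1 x z, out_inv x z]
      rw [Finset.sum_congr rfl fun x _ => e2 x, Finset.sum_comm]
      have e3 : ∀ u : Y,
          ∑ x : ZMod p, (p : ℝ)⁻¹ * (q u * (q (π ((lam - 1) * x) u) / out u) ^ s)
          = q u * ∑ w : ZMod p, (p : ℝ)⁻¹ * (q (π w u) / out u) ^ s := by
        intro u
        rw [Finset.mul_sum]
        refine Fintype.sum_bijective (fun x => (lam - 1) * x)
          ((Equiv.mulLeft₀ (lam - 1) hlam0).bijective) _ _ ?_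
        intro x
        ring
      rw [Finset.sum_congr rfl fun u _ => e3 u]
      have e4 : ∀ u : Y, q u * ∑ w : ZMod p, (p : ℝ)⁻¹ * (q (π w u) / out u) ^ s ≤ q u := by
        intro u
        by_cases hu : q u = 0
        · rw [hu, zero_mul]
        · have hqu : 0 < q u := lt_of_le_of_ne (hq0 u) (Ne.symm hu)
          have hou : 0 < out u := q_out_pos u hqu
          have hj := my_jensen_rpow Finset.univ (fun _ : ZMod p => (p : ℝ)⁻¹)
            (fun w => q (π w u) / out u) (fun w _ => by positivity)
            (fun w _ => div_nonneg (hq0 _) (out_nn u))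
            (by
              rw [Finset.sum_const, Finset.card_univ, ZMod.card, nsmul_eq_mul]
              field_simp) hs0 hs1
          have hsum : ∑ w : ZMod p, (p : ℝ)⁻¹ * (q (π w u) / out u) = 1 := by
            rw [Finset.sum_congr rfl fun w (_ : w ∈ Finset.univ) =>
              (mul_div_assoc ((p:ℝ)⁻¹) (q (π w u)) (out u)).symm, ← Finset.sum_div]
            rw [show ∑ w : ZMod p, (p:ℝ)⁻¹ * q (π w u) = out u by
              rw [hout u]
              exact Finset.sum_congr rfl fun w _ => by rw [one_div]]
            field_simp
          rw [hsum, Real.one_rpow] at hj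
          calc q u * ∑ w : ZMod p, (p : ℝ)⁻¹ * (q (π w u) / out u) ^ s
              ≤ q u * 1 := mul_le_mul_of_nonneg_left hj (le_of_lt hqu)
            _ = q u := mul_one _
      calc ∑ u, q u * ∑ w : ZMod p, (p : ℝ)⁻¹ * (q (π w u) / out u) ^ s
          ≤ ∑ u, q u := Finset.sum_le_sum fun u _ => e4 u
        _ = 1 := hq1
        _ ≤ φs := hφ1
  
  -- notation and positivity for the matrix level
  have hKc : (0 : ℝ) < (p : ℝ) ^ kk := by positivity
  set KS : ℝ := ((p : ℝ) ^ kk) ^ (-s) with hKS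
  set Kinv : ℝ := 1 / (p : ℝ) ^ kk with hKinv
  have hKinv0 : 0 ≤ Kinv := by rw [hKinv]; positivity
  set Hn : ℝ := (p : ℝ) ^ n with hHn
  have hHn0 : (0 : ℝ) < Hn := by rw [hHn]; positivity
  set Nr : ℝ := (Fintype.card (Matrix (Fin n) (Fin kk) (ZMod p)) : ℝ) with hNrdef
  have hNr0 : (0 : ℝ) < Nr := by
    rw [hNrdef]
    exact_mod_cast Fintype.card_pos
  have hcardv : (Fintype.card (Fin n → ZMod p) : ℝ) = Hn := by
    rw [hHn]
    simp [ZMod.card]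
  have hcardm : (Fintype.card (Fin kk → ZMod p) : ℝ) = (p : ℝ) ^ kk := by
    simp [ZMod.card]
  have hKinvS : Kinv ^ s = KS := by
    rw [hKinv, hKS, one_div, Real.inv_rpow (le_of_lt hKc), ← Real.rpow_neg (le_of_lt hKc)]
  have hKS0 : 0 ≤ KS := by rw [← hKinvS]; positivity
  -- V basics
  have Vnn : ∀ v y, 0 ≤ V v y := by
    intro v y
    rw [hV]
    exact Finset.prod_nonneg fun i _ => hq0 _
  have sumV : ∀ v, ∑ y, V v y = 1 := by
    intro v
    rw [Finset.sum_congr rfl fun y (_ : y ∈ Finset.univ) => hV v y,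
      my_sum_prod n (fun i z => q (π (v i) z)),
      Finset.prod_congr rfl fun i (_ : i ∈ Finset.univ) => hq1x (v i), Finset.prod_const_one]
  have Qnn : ∀ y, 0 ≤ Qf y := by
    intro y
    rw [hQf]
    exact Finset.prod_nonneg fun i _ => out_nn _
  have QV : ∀ y, ∑ v, Hn⁻¹ * V v y = Qf y := by
    intro y
    rw [← Finset.mul_sum, Finset.sum_congr rfl fun v (_ : v ∈ Finset.univ) => hV v y,
      my_sum_prod n (fun i x => q (π x (y i))),
      Finset.prod_congr rfl fun i (_ : i ∈ Finset.univ) => sumqx (y i),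
      Finset.prod_mul_distrib, Finset.prod_const, Finset.card_univ, Fintype.card_fin,
      hQf, hHn]
    field_simp
  have hQ0V : ∀ y, Qf y = 0 → ∀ v, V v y = 0 := by
    intro y h v
    rw [hQf] at h
    obtain ⟨i, _, hi⟩ := Finset.prod_eq_zero_iff.mp h
    rw [hV]
    apply Finset.prod_eq_zero (Finset.mem_univ i)
    have h1 := q_le (v i) (y i)
    rw [hi, mul_zero] at h1
    exact le_antisymm h1 (hq0 _)
  have Pnn : ∀ A y, 0 ≤ Pf A y := by
    intro A y
    rw [hPf]
    exact Finset.sum_nonneg fun m _ => mul_nonneg hKinv0 (Vnn _ _)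
  have sumP : ∀ A, ∑ y, Pf A y = 1 := by
    intro A
    rw [Finset.sum_congr rfl fun y (_ : y ∈ Finset.univ) => hPf A y, Finset.sum_comm]
    rw [Finset.sum_congr rfl fun m (_ : m ∈ Finset.univ) => by
      rw [← Finset.mul_sum, sumV, mul_one]]
    rw [Finset.sum_const, Finset.card_univ, nsmul_eq_mul, hcardm, hKinv]
    field_simp
  -- uniformity facts
  have F1 : ∀ m : Fin kk → ZMod p, m ≠ 0 → ∀ f : (Fin n → ZMod p) → ℝ,
      ∑ A : Matrix (Fin n) (Fin kk) (ZMod p), Nr⁻¹ * f (A.mulVec m)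
      = ∑ v : Fin n → ZMod p, Hn⁻¹ * f v := by
    intro m hm f
    have hhom := my_sum_surj_hom
      (AddMonoidHom.mk' (fun A : Matrix (Fin n) (Fin kk) (ZMod p) => A.mulVec m)
        (fun A B => Matrix.add_mulVec A B m)) (my_surj_one hp m hm) f
    simp only [AddMonoidHom.mk'_apply] at hhom
    rw [hcardv, ← hNrdef] at hhom
    rw [← Finset.mul_sum, ← Finset.mul_sum]
    rw [inv_mul_eq_div, inv_mul_eq_div, div_eq_div_iff (ne_of_gt hNr0) (ne_of_gt hHn0)]
    linear_combination hhom
  have F2 : ∀ m m' : Fin kk → ZMod p, m ≠ 0 → (∀ c : ZMod p, m' ≠ c • m) →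
      ∀ f g : (Fin n → ZMod p) → ℝ,
      ∑ A : Matrix (Fin n) (Fin kk) (ZMod p), Nr⁻¹ * (f (A.mulVec m) * g (A.mulVec m'))
      = (∑ v : Fin n → ZMod p, Hn⁻¹ * f v) * (∑ w : Fin n → ZMod p, Hn⁻¹ * g w) := by
    intro m m' hm hind f g
    have hhom := my_sum_surj_hom
      (AddMonoidHom.mk' (fun A : Matrix (Fin n) (Fin kk) (ZMod p) =>
          (A.mulVec m, A.mulVec m'))
        (fun A B => by
          simp [Matrix.add_mulVec, Prod.ext_iff]))
      (my_surj_two hp m m' hm hind) (fun vw => f vw.1 * g vw.2)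
    simp only [AddMonoidHom.mk'_apply] at hhom
    have hcardp : (Fintype.card ((Fin n → ZMod p) × (Fin n → ZMod p)) : ℝ) = Hn * Hn := by
      rw [Fintype.card_prod]
      push_cast
      rw [hcardv]
    rw [hcardp, ← hNrdef, Fintype.sum_prod_type] at hhom
    rw [← Finset.sum_mul_sum] at hhom
    rw [← Finset.mul_sum, ← Finset.mul_sum, ← Finset.mul_sum]
    rw [inv_mul_eq_div]
    rw [div_eq_iff (ne_of_gt hNr0)]
    field_simp
    linear_combination hhom
    -- product/ratio factorization
  have hVratio : ∀ (a b : Fin n → ZMod p) (y : Fin n → Y),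
      V a y * (V b y / Qf y) ^ s
      = ∏ i, (q (π (a i) (y i)) * (q (π (b i) (y i)) / out (y i)) ^ s) := by
    intro a b y
    rw [hV, hV, hQf, ← Finset.prod_div_distrib,
      ← Real.finset_prod_rpow _ _ (fun i _ => div_nonneg (hq0 _) (out_nn _)) s,
      ← Finset.prod_mul_distrib]
  -- the key second-moment-type bound, for every message m and scalar lam
  have hT2 : ∀ (lam : ZMod p) (m : Fin kk → ZMod p),
      ∑ A : Matrix (Fin n) (Fin kk) (ZMod p),
        Nr⁻¹ * (∑ y, V (A.mulVec m) y * (V (A.mulVec (lam • m)) y / Qf y) ^ s)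
      ≤ φs ^ n := by
    intro lam m
    by_cases hm : m = 0
    · subst hm
      have hzero : ∀ A : Matrix (Fin n) (Fin kk) (ZMod p),
          A.mulVec (lam • (0 : Fin kk → ZMod p)) = 0 := by
        intro A
        rw [smul_zero, Matrix.mulVec_zero]
      have hC : ∀ A : Matrix (Fin n) (Fin kk) (ZMod p),
          (∑ y, V (A.mulVec (0 : Fin kk → ZMod p)) y
              * (V (A.mulVec (lam • (0 : Fin kk → ZMod p))) y / Qf y) ^ s)
          = φs ^ n := by
        intro A
        rw [Finset.sum_congr rfl fun y (_ : y ∈ Finset.univ) => by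
          rw [hzero A, Matrix.mulVec_zero, hVratio]]
        rw [my_sum_prod n (fun i z => q (π ((0 : Fin n → ZMod p) i) z)
          * (q (π ((0 : Fin n → ZMod p) i) z) / out z) ^ s)]
        simp only [Pi.zero_apply, hπ0, ← hφs]
        rw [Finset.prod_const, Finset.card_univ, Fintype.card_fin]
      rw [Finset.sum_congr rfl fun A (_ : A ∈ Finset.univ) => by rw [hC A]]
      rw [Finset.sum_const, Finset.card_univ, nsmul_eq_mul, ← hNrdef, ← mul_assoc,
        mul_inv_cancel₀ (ne_of_gt hNr0), one_mul]
    · have hmv : ∀ A : Matrix (Fin n) (Fin kk) (ZMod p),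
          A.mulVec (lam • m) = lam • A.mulVec m := by
        intro A
        rw [Matrix.mulVec_smul]
      rw [Finset.sum_congr rfl fun A (_ : A ∈ Finset.univ) => by rw [hmv A]]
      rw [F1 m hm (fun v => ∑ y, V v y * (V (lam • v) y / Qf y) ^ s)]
      have hfact : ∑ v : Fin n → ZMod p, Hn⁻¹ * (∑ y, V v y * (V (lam • v) y / Qf y) ^ s)
          = (∑ x : ZMod p, ∑ z : Y,
              (p : ℝ)⁻¹ * (q (π x z) * (q (π (lam * x) z) / out z) ^ s)) ^ n := by
        rw [← my_factorize n (fun x z => (p : ℝ)⁻¹ * (q (π x z) * (q (π (lam * x) z) / out z) ^ s))]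
        apply Finset.sum_congr rfl
        intro v _
        rw [Finset.mul_sum]
        apply Finset.sum_congr rfl
        intro y _
        rw [hVratio]
        simp only [Pi.smul_apply, smul_eq_mul]
        rw [show Hn⁻¹ = ∏ _i : Fin n, (p:ℝ)⁻¹ from by
          rw [Finset.prod_const, Finset.card_univ, Fintype.card_fin, inv_pow, hHn]]
        rw [← Finset.prod_mul_distrib]
      rw [hfact]
      have hgnn : 0 ≤ ∑ x : ZMod p, ∑ z : Y,
          (p : ℝ)⁻¹ * (q (π x z) * (q (π (lam * x) z) / out z) ^ s) := by
        apply Finset.sum_nonneg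
        intro x _
        apply Finset.sum_nonneg
        intro z _
        have h1 : 0 ≤ (q (π (lam * x) z) / out z) ^ s :=
          Real.rpow_nonneg (div_nonneg (hq0 _) (out_nn _)) s
        have h2 : (0:ℝ) ≤ (p:ℝ)⁻¹ := by positivity
        exact mul_nonneg h2 (mul_nonneg (hq0 _) h1)
      exact pow_le_pow_left₀ hgnn (hg lam) n
    -- averaging a constant over all matrices
  have hconstA : ∀ c : ℝ, ∑ _A : Matrix (Fin n) (Fin kk) (ZMod p), Nr⁻¹ * c = c := by
    intro c
    rw [Finset.sum_const, Finset.card_univ, nsmul_eq_mul, ← hNrdef, ← mul_assoc,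
      mul_inv_cancel₀ (ne_of_gt hNr0), one_mul]
  -- the independent part: expected cross terms
  have hTB : ∀ m : Fin kk → ZMod p,
      ∑ A : Matrix (Fin n) (Fin kk) (ZMod p), Nr⁻¹ * (∑ y, V (A.mulVec m) y *
        ((∑ m' ∈ Finset.univ.filter (fun m' : Fin kk → ZMod p => ¬ ∃ c : ZMod p, m' = c • m),
          Kinv * V (A.mulVec m') y) / Qf y) ^ s)
      ≤ 1 := by
    intro m
    set S := Finset.univ.filter (fun m' : Fin kk → ZMod p => ¬ ∃ c : ZMod p, m' = c • m) with hSdef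
    have indnn : ∀ (A : Matrix (Fin n) (Fin kk) (ZMod p)) y,
        0 ≤ ∑ m' ∈ S, Kinv * V (A.mulVec m') y :=
      fun A y => Finset.sum_nonneg fun m' _ => mul_nonneg hKinv0 (Vnn _ _)
    have hcardS : (S.card : ℝ) * Kinv ≤ 1 := by
      have h1 : (S.card : ℝ) ≤ (Fintype.card (Fin kk → ZMod p) : ℝ) := by
        have h2 : S.card ≤ (Finset.univ : Finset (Fin kk → ZMod p)).card := by
          rw [hSdef]
          exact Finset.card_filter_le _ _
        rw [Finset.card_univ] at h2
        exact_mod_cast h2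
      calc (S.card : ℝ) * Kinv ≤ (Fintype.card (Fin kk → ZMod p) : ℝ) * Kinv :=
            mul_le_mul_of_nonneg_right h1 hKinv0
        _ = 1 := by rw [hcardm, hKinv]; field_simp
    have hpair : ∀ (y : Fin n → Y), ∀ m' ∈ S,
        ∑ A : Matrix (Fin n) (Fin kk) (ZMod p), Nr⁻¹ * (V (A.mulVec m) y * V (A.mulVec m') y)
        = (∑ A : Matrix (Fin n) (Fin kk) (ZMod p), Nr⁻¹ * V (A.mulVec m) y) * Qf y := by
      intro y m' hm'
      rw [hSdef, Finset.mem_filter] at hm'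
      have hm'2 := hm'.2
      push_neg at hm'2
      by_cases hm0 : m = 0
      · subst hm0
        have hm'ne : m' ≠ 0 := by
          intro h
          exact hm'2 0 (by rw [h, zero_smul])
        have e0 : ∀ A : Matrix (Fin n) (Fin kk) (ZMod p),
            A.mulVec (0 : Fin kk → ZMod p) = 0 := fun A => Matrix.mulVec_zero A
        calc ∑ A : Matrix (Fin n) (Fin kk) (ZMod p),
              Nr⁻¹ * (V (A.mulVec 0) y * V (A.mulVec m') y)
            = V 0 y * ∑ A : Matrix (Fin n) (Fin kk) (ZMod p), Nr⁻¹ * V (A.mulVec m') y := by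
              rw [Finset.mul_sum]
              exact Finset.sum_congr rfl fun A _ => by rw [e0 A]; ring
          _ = V 0 y * Qf y := by rw [F1 m' hm'ne (fun v => V v y), QV]
          _ = (∑ A : Matrix (Fin n) (Fin kk) (ZMod p), Nr⁻¹ * V (A.mulVec 0) y) * Qf y := by
              rw [Finset.sum_congr rfl fun A (_ : A ∈ Finset.univ) => by rw [e0 A],
                hconstA (V 0 y)]
      · rw [F2 m m' hm0 hm'2 (fun v => V v y) (fun w => V w y), QV,
          F1 m hm0 (fun v => V v y), QV]
    have hE1nn : ∀ y, (0:ℝ) ≤ ∑ A : Matrix (Fin n) (Fin kk) (ZMod p),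
        Nr⁻¹ * V (A.mulVec m) y :=
      fun y => Finset.sum_nonneg fun A _ => mul_nonneg (inv_nonneg.mpr hNr0.le) (Vnn _ _)
    have hE2nn : ∀ y, (0:ℝ) ≤ ∑ A : Matrix (Fin n) (Fin kk) (ZMod p),
        Nr⁻¹ * (V (A.mulVec m) y * (∑ m' ∈ S, Kinv * V (A.mulVec m') y)) :=
      fun y => Finset.sum_nonneg fun A _ => mul_nonneg (inv_nonneg.mpr hNr0.le)
        (mul_nonneg (Vnn _ _) (indnn A y))
    have hE2le : ∀ y, ∑ A : Matrix (Fin n) (Fin kk) (ZMod p),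
        Nr⁻¹ * (V (A.mulVec m) y * (∑ m' ∈ S, Kinv * V (A.mulVec m') y))
        ≤ (∑ A : Matrix (Fin n) (Fin kk) (ZMod p), Nr⁻¹ * V (A.mulVec m) y) * Qf y := by
      intro y
      have e1 : ∑ A : Matrix (Fin n) (Fin kk) (ZMod p),
          Nr⁻¹ * (V (A.mulVec m) y * (∑ m' ∈ S, Kinv * V (A.mulVec m') y))
          = ∑ m' ∈ S, Kinv *
            ∑ A : Matrix (Fin n) (Fin kk) (ZMod p), Nr⁻¹ * (V (A.mulVec m) y * V (A.mulVec m') y) := by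
        rw [Finset.sum_congr rfl fun A (_ : A ∈ Finset.univ) => by
          rw [Finset.mul_sum, Finset.mul_sum]]
        rw [Finset.sum_comm]
        exact Finset.sum_congr rfl fun m' _ => by
          rw [Finset.mul_sum]
          exact Finset.sum_congr rfl fun A _ => by ring
      rw [e1, Finset.sum_congr rfl (fun m' hm' => by rw [hpair y m' hm']), Finset.sum_const,
        nsmul_eq_mul]
      have hXnn : (0:ℝ) ≤ (∑ A : Matrix (Fin n) (Fin kk) (ZMod p),
          Nr⁻¹ * V (A.mulVec m) y) * Qf y := mul_nonneg (hE1nn y) (Qnn y)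
      calc (S.card : ℝ) * (Kinv * ((∑ A : Matrix (Fin n) (Fin kk) (ZMod p),
              Nr⁻¹ * V (A.mulVec m) y) * Qf y))
          = ((S.card : ℝ) * Kinv) * ((∑ A : Matrix (Fin n) (Fin kk) (ZMod p),
              Nr⁻¹ * V (A.mulVec m) y) * Qf y) := by ring
        _ ≤ 1 * ((∑ A : Matrix (Fin n) (Fin kk) (ZMod p),
              Nr⁻¹ * V (A.mulVec m) y) * Qf y) := mul_le_mul_of_nonneg_right hcardS hXnn
        _ = _ := one_mul _
    have hyb : ∀ y, ∑ A : Matrix (Fin n) (Fin kk) (ZMod p),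
        Nr⁻¹ * (V (A.mulVec m) y * ((∑ m' ∈ S, Kinv * V (A.mulVec m') y) / Qf y) ^ s)
        ≤ ∑ A : Matrix (Fin n) (Fin kk) (ZMod p), Nr⁻¹ * V (A.mulVec m) y := by
      intro y
      have h1s0 : (0:ℝ) < 1 - s := by linarith
      have h1s1 : 1 - s < 1 := by linarith
      have hh := my_hoelder Finset.univ (fun A : Matrix (Fin n) (Fin kk) (ZMod p) =>
          Nr⁻¹ * V (A.mulVec m) y)
        (fun A : Matrix (Fin n) (Fin kk) (ZMod p) =>
          Nr⁻¹ * (V (A.mulVec m) y * ((∑ m' ∈ S, Kinv * V (A.mulVec m') y) / Qf y)))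
        (fun A _ => mul_nonneg (inv_nonneg.mpr hNr0.le) (Vnn _ _))
        (fun A _ => mul_nonneg (inv_nonneg.mpr hNr0.le)
          (mul_nonneg (Vnn _ _) (div_nonneg (indnn A y) (Qnn y)))) h1s0 h1s1
      rw [sub_sub_cancel] at hh
      have hterm : ∀ A ∈ (Finset.univ : Finset (Matrix (Fin n) (Fin kk) (ZMod p))),
          (Nr⁻¹ * V (A.mulVec m) y) ^ (1-s)
            * (Nr⁻¹ * (V (A.mulVec m) y * ((∑ m' ∈ S, Kinv * V (A.mulVec m') y) / Qf y))) ^ s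
          = Nr⁻¹ * (V (A.mulVec m) y * ((∑ m' ∈ S, Kinv * V (A.mulVec m') y) / Qf y) ^ s) := by
        intro A _
        have htnn : 0 ≤ Nr⁻¹ * V (A.mulVec m) y :=
          mul_nonneg (inv_nonneg.mpr hNr0.le) (Vnn _ _)
        have hrnn : 0 ≤ (∑ m' ∈ S, Kinv * V (A.mulVec m') y) / Qf y :=
          div_nonneg (indnn A y) (Qnn y)
        rw [show Nr⁻¹ * (V (A.mulVec m) y * ((∑ m' ∈ S, Kinv * V (A.mulVec m') y) / Qf y))
            = (Nr⁻¹ * V (A.mulVec m) y) * ((∑ m' ∈ S, Kinv * V (A.mulVec m') y) / Qf y)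
            from by ring]
        rw [Real.mul_rpow htnn hrnn]
        rw [show (Nr⁻¹ * V (A.mulVec m) y) ^ (1-s) * ((Nr⁻¹ * V (A.mulVec m) y) ^ s
            * ((∑ m' ∈ S, Kinv * V (A.mulVec m') y) / Qf y) ^ s)
            = ((Nr⁻¹ * V (A.mulVec m) y) ^ (1-s) * (Nr⁻¹ * V (A.mulVec m) y) ^ s)
            * ((∑ m' ∈ S, Kinv * V (A.mulVec m') y) / Qf y) ^ s from by ring]
        rw [← Real.rpow_add' htnn (by norm_num : (1:ℝ)-s + s ≠ 0)]
        norm_num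
        ring
      rw [Finset.sum_congr rfl hterm] at hh
      have hv_swap : ∑ A : Matrix (Fin n) (Fin kk) (ZMod p),
          Nr⁻¹ * (V (A.mulVec m) y * ((∑ m' ∈ S, Kinv * V (A.mulVec m') y) / Qf y))
          = (∑ A : Matrix (Fin n) (Fin kk) (ZMod p),
              Nr⁻¹ * (V (A.mulVec m) y * (∑ m' ∈ S, Kinv * V (A.mulVec m') y))) / Qf y := by
        rw [Finset.sum_div]
        exact Finset.sum_congr rfl fun A _ => by ring
      rw [hv_swap] at hh
      refine le_trans hh ?_
      by_cases hQy : Qf y = 0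
      · rw [hQy, div_zero, Real.zero_rpow (ne_of_gt hs0), mul_zero]
        exact hE1nn y
      · have hQpos : 0 < Qf y := lt_of_le_of_ne (Qnn y) (Ne.symm hQy)
        have h3 : (∑ A : Matrix (Fin n) (Fin kk) (ZMod p),
            Nr⁻¹ * (V (A.mulVec m) y * (∑ m' ∈ S, Kinv * V (A.mulVec m') y))) / Qf y
            ≤ ∑ A : Matrix (Fin n) (Fin kk) (ZMod p), Nr⁻¹ * V (A.mulVec m) y :=
          (div_le_iff₀ hQpos).mpr (hE2le y)
        calc (∑ A : Matrix (Fin n) (Fin kk) (ZMod p), Nr⁻¹ * V (A.mulVec m) y) ^ (1-s)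
              * ((∑ A : Matrix (Fin n) (Fin kk) (ZMod p),
                Nr⁻¹ * (V (A.mulVec m) y * (∑ m' ∈ S, Kinv * V (A.mulVec m') y))) / Qf y) ^ s
            ≤ (∑ A : Matrix (Fin n) (Fin kk) (ZMod p), Nr⁻¹ * V (A.mulVec m) y) ^ (1-s)
              * (∑ A : Matrix (Fin n) (Fin kk) (ZMod p), Nr⁻¹ * V (A.mulVec m) y) ^ s := by
              apply mul_le_mul_of_nonneg_left
                (Real.rpow_le_rpow (div_nonneg (hE2nn y) (Qnn y)) h3 hs0.le)
                (Real.rpow_nonneg (hE1nn y) _)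
          _ = ∑ A : Matrix (Fin n) (Fin kk) (ZMod p), Nr⁻¹ * V (A.mulVec m) y := by
              rw [← Real.rpow_add' (hE1nn y) (by norm_num : (1:ℝ)-s + s ≠ 0)]
              norm_num
    calc ∑ A : Matrix (Fin n) (Fin kk) (ZMod p), Nr⁻¹ * (∑ y, V (A.mulVec m) y *
          ((∑ m' ∈ S, Kinv * V (A.mulVec m') y) / Qf y) ^ s)
        = ∑ y, ∑ A : Matrix (Fin n) (Fin kk) (ZMod p), Nr⁻¹ * (V (A.mulVec m) y *
          ((∑ m' ∈ S, Kinv * V (A.mulVec m') y) / Qf y) ^ s) := by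
          rw [Finset.sum_congr rfl fun A (_ : A ∈ Finset.univ) => Finset.mul_sum _ _ _]
          exact Finset.sum_comm
      _ ≤ ∑ y, ∑ A : Matrix (Fin n) (Fin kk) (ZMod p), Nr⁻¹ * V (A.mulVec m) y :=
          Finset.sum_le_sum fun y _ => hyb y
      _ = ∑ A : Matrix (Fin n) (Fin kk) (ZMod p), Nr⁻¹ * ∑ y, V (A.mulVec m) y := by
          rw [Finset.sum_comm]
          exact Finset.sum_congr rfl fun A _ => (Finset.mul_sum _ _ _).symm
      _ = 1 := by
          rw [Finset.sum_congr rfl fun A (_ : A ∈ Finset.univ) => by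
            rw [sumV (A.mulVec m)], hconstA 1]
    -- the dependent part
  have hTA : ∀ m : Fin kk → ZMod p,
      ∑ A : Matrix (Fin n) (Fin kk) (ZMod p), Nr⁻¹ * (∑ y, V (A.mulVec m) y *
        ((∑ m' ∈ Finset.univ.filter (fun m' : Fin kk → ZMod p => ∃ c : ZMod p, m' = c • m),
          Kinv * V (A.mulVec m') y) / Qf y) ^ s)
      ≤ KS * ((p : ℝ) * φs ^ n) := by
    intro m
    have depnn : ∀ (A : Matrix (Fin n) (Fin kk) (ZMod p)) y,
        0 ≤ ∑ m' ∈ Finset.univ.filter (fun m' : Fin kk → ZMod p => ∃ c : ZMod p, m' = c • m),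
          Kinv * V (A.mulVec m') y :=
      fun A y => Finset.sum_nonneg fun m' _ => mul_nonneg hKinv0 (Vnn _ _)
    have hdep : ∀ (A : Matrix (Fin n) (Fin kk) (ZMod p)) y,
        (∑ m' ∈ Finset.univ.filter (fun m' : Fin kk → ZMod p => ∃ c : ZMod p, m' = c • m),
          Kinv * V (A.mulVec m') y)
        ≤ ∑ lam : ZMod p, Kinv * V (A.mulVec (lam • m)) y := by
      intro A y
      by_cases hm0 : m = 0
      · subst hm0
        have hfilter : Finset.univ.filter
            (fun m' : Fin kk → ZMod p => ∃ c : ZMod p, m' = c • (0 : Fin kk → ZMod p))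
            = {(0 : Fin kk → ZMod p)} := by
          ext m'
          simp [smul_zero]
        rw [hfilter, Finset.sum_singleton]
        have hrw : ∀ lam : ZMod p, Kinv * V (A.mulVec (lam • (0 : Fin kk → ZMod p))) y
            = Kinv * V (A.mulVec (0 : Fin kk → ZMod p)) y := fun lam => by rw [smul_zero]
        rw [Finset.sum_congr rfl fun lam (_ : lam ∈ Finset.univ) => hrw lam,
          Finset.sum_const, Finset.card_univ, ZMod.card, nsmul_eq_mul]
        have h1 : (1:ℝ) ≤ (p:ℝ) := by exact_mod_cast hp.one_lt.le
        nlinarith [mul_nonneg hKinv0 (Vnn (A.mulVec (0 : Fin kk → ZMod p)) y)]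
      · have himg : Finset.univ.filter (fun m' : Fin kk → ZMod p => ∃ c : ZMod p, m' = c • m)
            = Finset.image (fun c : ZMod p => c • m) Finset.univ := by
          ext m'
          simp [eq_comm]
        obtain ⟨j, hj⟩ : ∃ j, m j ≠ 0 := by
          by_contra h
          push_neg at h
          exact hm0 (funext h)
        have hinj : ∀ c ∈ (Finset.univ : Finset (ZMod p)), ∀ c' ∈ (Finset.univ : Finset (ZMod p)),
            c • m = c' • m → c = c' := by
          intro c _ c' _ h
          have := congrFun h j
          simp only [Pi.smul_apply, smul_eq_mul] at this
          exact mul_right_cancel₀ hj this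
        rw [himg, Finset.sum_image hinj]
    have key : ∀ (A : Matrix (Fin n) (Fin kk) (ZMod p)) y,
        V (A.mulVec m) y *
          ((∑ m' ∈ Finset.univ.filter (fun m' : Fin kk → ZMod p => ∃ c : ZMod p, m' = c • m),
            Kinv * V (A.mulVec m') y) / Qf y) ^ s
        ≤ ∑ lam : ZMod p, KS * (V (A.mulVec m) y * (V (A.mulVec (lam • m)) y / Qf y) ^ s) := by
      intro A y
      by_cases hQy : Qf y = 0
      · rw [hQ0V y hQy (A.mulVec m)]
        simp
      · have hQpos : 0 < Qf y := lt_of_le_of_ne (Qnn y) (Ne.symm hQy)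
        have c1 : ((∑ m' ∈ Finset.univ.filter
              (fun m' : Fin kk → ZMod p => ∃ c : ZMod p, m' = c • m),
              Kinv * V (A.mulVec m') y) / Qf y) ^ s
            ≤ ((∑ lam : ZMod p, Kinv * V (A.mulVec (lam • m)) y) / Qf y) ^ s := by
          apply Real.rpow_le_rpow (div_nonneg (depnn A y) (Qnn y)) _ hs0.le
          gcongr
          exact hdep A y
        have c2 : ((∑ lam : ZMod p, Kinv * V (A.mulVec (lam • m)) y) / Qf y) ^ s
            ≤ ∑ lam : ZMod p, KS * (V (A.mulVec (lam • m)) y / Qf y) ^ s := by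
          have e1 : (∑ lam : ZMod p, Kinv * V (A.mulVec (lam • m)) y) / Qf y
              = ∑ lam : ZMod p, Kinv * (V (A.mulVec (lam • m)) y / Qf y) := by
            rw [Finset.sum_div]
            exact Finset.sum_congr rfl fun lam _ => by ring
          rw [e1]
          refine le_trans (my_rpow_sum_le Finset.univ _
            (fun lam _ => mul_nonneg hKinv0 (div_nonneg (Vnn _ _) (Qnn y))) hs0 hs1) ?_
          apply le_of_eq
          exact Finset.sum_congr rfl fun lam _ => by
            rw [Real.mul_rpow hKinv0 (div_nonneg (Vnn _ _) (Qnn y)), hKinvS]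
        calc V (A.mulVec m) y *
              ((∑ m' ∈ Finset.univ.filter
                (fun m' : Fin kk → ZMod p => ∃ c : ZMod p, m' = c • m),
                Kinv * V (A.mulVec m') y) / Qf y) ^ s
            ≤ V (A.mulVec m) y * ∑ lam : ZMod p, KS * (V (A.mulVec (lam • m)) y / Qf y) ^ s :=
              mul_le_mul_of_nonneg_left (le_trans c1 c2) (Vnn _ _)
          _ = ∑ lam : ZMod p, KS * (V (A.mulVec m) y * (V (A.mulVec (lam • m)) y / Qf y) ^ s) := by
              rw [Finset.mul_sum]
              exact Finset.sum_congr rfl fun lam _ => by ring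
    calc ∑ A : Matrix (Fin n) (Fin kk) (ZMod p), Nr⁻¹ * (∑ y, V (A.mulVec m) y *
          ((∑ m' ∈ Finset.univ.filter (fun m' : Fin kk → ZMod p => ∃ c : ZMod p, m' = c • m),
            Kinv * V (A.mulVec m') y) / Qf y) ^ s)
        ≤ ∑ A : Matrix (Fin n) (Fin kk) (ZMod p), Nr⁻¹ * (∑ y, ∑ lam : ZMod p,
            KS * (V (A.mulVec m) y * (V (A.mulVec (lam • m)) y / Qf y) ^ s)) := by
          apply Finset.sum_le_sum
          intro A _
          exact mul_le_mul_of_nonneg_left (Finset.sum_le_sum fun y _ => key A y)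
            (inv_nonneg.mpr hNr0.le)
      _ = ∑ lam : ZMod p, KS * (∑ A : Matrix (Fin n) (Fin kk) (ZMod p),
            Nr⁻¹ * (∑ y, V (A.mulVec m) y * (V (A.mulVec (lam • m)) y / Qf y) ^ s)) := by
          rw [Finset.sum_congr rfl fun A (_ : A ∈ Finset.univ) => by
            rw [Finset.sum_comm, Finset.mul_sum]]
          rw [Finset.sum_comm]
          apply Finset.sum_congr rfl
          intro lam _
          rw [Finset.mul_sum]
          apply Finset.sum_congr rfl
          intro A _
          rw [← Finset.mul_sum]
          ring
      _ ≤ ∑ lam : ZMod p, KS * φs ^ n :=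
          Finset.sum_le_sum fun lam _ => mul_le_mul_of_nonneg_left (hT2 lam m) hKS0
      _ = KS * ((p : ℝ) * φs ^ n) := by
          rw [Finset.sum_const, Finset.card_univ, ZMod.card, nsmul_eq_mul]
          ring
    -- splitting the code distribution
  have hPsplit : ∀ (m : Fin kk → ZMod p) (A : Matrix (Fin n) (Fin kk) (ZMod p)) y,
      Pf A y = (∑ m' ∈ Finset.univ.filter
          (fun m' : Fin kk → ZMod p => ∃ c : ZMod p, m' = c • m), Kinv * V (A.mulVec m') y)
        + (∑ m' ∈ Finset.univ.filter
          (fun m' : Fin kk → ZMod p => ¬ ∃ c : ZMod p, m' = c • m), Kinv * V (A.mulVec m') y) := by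
    intro m A y
    rw [hPf]
    exact (Finset.sum_filter_add_sum_filter_not Finset.univ _ _).symm
  have split2 : ∀ (m : Fin kk → ZMod p) (A : Matrix (Fin n) (Fin kk) (ZMod p)) y,
      Kinv * V (A.mulVec m) y * (Pf A y / Qf y) ^ s
      ≤ Kinv * (V (A.mulVec m) y * ((∑ m' ∈ Finset.univ.filter
            (fun m' : Fin kk → ZMod p => ∃ c : ZMod p, m' = c • m),
            Kinv * V (A.mulVec m') y) / Qf y) ^ s)
        + Kinv * (V (A.mulVec m) y * ((∑ m' ∈ Finset.univ.filter
            (fun m' : Fin kk → ZMod p => ¬ ∃ c : ZMod p, m' = c • m),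
            Kinv * V (A.mulVec m') y) / Qf y) ^ s) := by
    intro m A y
    have depnn : (0:ℝ) ≤ ∑ m' ∈ Finset.univ.filter
        (fun m' : Fin kk → ZMod p => ∃ c : ZMod p, m' = c • m), Kinv * V (A.mulVec m') y :=
      Finset.sum_nonneg fun m' _ => mul_nonneg hKinv0 (Vnn _ _)
    have indnn : (0:ℝ) ≤ ∑ m' ∈ Finset.univ.filter
        (fun m' : Fin kk → ZMod p => ¬ ∃ c : ZMod p, m' = c • m), Kinv * V (A.mulVec m') y :=
      Finset.sum_nonneg fun m' _ => mul_nonneg hKinv0 (Vnn _ _)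
    by_cases hQy : Qf y = 0
    · rw [hQ0V y hQy (A.mulVec m)]
      simp
    · have e1 : (Pf A y / Qf y) ^ s
          ≤ ((∑ m' ∈ Finset.univ.filter
              (fun m' : Fin kk → ZMod p => ∃ c : ZMod p, m' = c • m),
              Kinv * V (A.mulVec m') y) / Qf y) ^ s
            + ((∑ m' ∈ Finset.univ.filter
              (fun m' : Fin kk → ZMod p => ¬ ∃ c : ZMod p, m' = c • m),
              Kinv * V (A.mulVec m') y) / Qf y) ^ s := by
        rw [hPsplit m A y, add_div]
        exact my_rpow_add_le (div_nonneg depnn (Qnn y)) (div_nonneg indnn (Qnn y)) hs0 hs1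
      have e2 : Kinv * V (A.mulVec m) y * (Pf A y / Qf y) ^ s
          ≤ Kinv * V (A.mulVec m) y * (((∑ m' ∈ Finset.univ.filter
              (fun m' : Fin kk → ZMod p => ∃ c : ZMod p, m' = c • m),
              Kinv * V (A.mulVec m') y) / Qf y) ^ s
            + ((∑ m' ∈ Finset.univ.filter
              (fun m' : Fin kk → ZMod p => ¬ ∃ c : ZMod p, m' = c • m),
              Kinv * V (A.mulVec m') y) / Qf y) ^ s) :=
        mul_le_mul_of_nonneg_left e1 (mul_nonneg hKinv0 (Vnn _ _))
      refine le_trans e2 (le_of_eq ?_)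
      ring
  -- the expected chi-square-type bound
  have cbar_le : ∑ A : Matrix (Fin n) (Fin kk) (ZMod p),
      Nr⁻¹ * (∑ y, Pf A y * (Pf A y / Qf y) ^ s)
      ≤ 1 + (p : ℝ) * KS * φs ^ n := by
    have expand : ∀ A : Matrix (Fin n) (Fin kk) (ZMod p),
        (∑ y, Pf A y * (Pf A y / Qf y) ^ s)
        = ∑ m : Fin kk → ZMod p, ∑ y, Kinv * V (A.mulVec m) y * (Pf A y / Qf y) ^ s := by
      intro A
      have hy : ∀ y, ∑ m : Fin kk → ZMod p, Kinv * V (A.mulVec m) y * (Pf A y / Qf y) ^ s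
          = Pf A y * (Pf A y / Qf y) ^ s := by
        intro y
        rw [← Finset.sum_mul, ← hPf]
      rw [Finset.sum_congr rfl fun y (_ : y ∈ Finset.univ) => (hy y).symm]
      exact Finset.sum_comm
    calc ∑ A : Matrix (Fin n) (Fin kk) (ZMod p),
          Nr⁻¹ * (∑ y, Pf A y * (Pf A y / Qf y) ^ s)
        = ∑ m : Fin kk → ZMod p, ∑ A : Matrix (Fin n) (Fin kk) (ZMod p),
            Nr⁻¹ * (∑ y, Kinv * V (A.mulVec m) y * (Pf A y / Qf y) ^ s) := by
          rw [Finset.sum_congr rfl fun A (_ : A ∈ Finset.univ) => by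
            rw [expand A, Finset.mul_sum]]
          exact Finset.sum_comm
      _ ≤ ∑ m : Fin kk → ZMod p,
            (Kinv * (∑ A : Matrix (Fin n) (Fin kk) (ZMod p), Nr⁻¹ * (∑ y, V (A.mulVec m) y *
              ((∑ m' ∈ Finset.univ.filter
                (fun m' : Fin kk → ZMod p => ∃ c : ZMod p, m' = c • m),
                Kinv * V (A.mulVec m') y) / Qf y) ^ s))
            + Kinv * (∑ A : Matrix (Fin n) (Fin kk) (ZMod p), Nr⁻¹ * (∑ y, V (A.mulVec m) y *
              ((∑ m' ∈ Finset.univ.filter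
                (fun m' : Fin kk → ZMod p => ¬ ∃ c : ZMod p, m' = c • m),
                Kinv * V (A.mulVec m') y) / Qf y) ^ s))) := by
          apply Finset.sum_le_sum
          intro m _
          have hA : ∀ A : Matrix (Fin n) (Fin kk) (ZMod p),
              Nr⁻¹ * (∑ y, Kinv * V (A.mulVec m) y * (Pf A y / Qf y) ^ s)
              ≤ Nr⁻¹ * (Kinv * (∑ y, V (A.mulVec m) y *
                  ((∑ m' ∈ Finset.univ.filter
                    (fun m' : Fin kk → ZMod p => ∃ c : ZMod p, m' = c • m),
                    Kinv * V (A.mulVec m') y) / Qf y) ^ s)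
                + Kinv * (∑ y, V (A.mulVec m) y *
                  ((∑ m' ∈ Finset.univ.filter
                    (fun m' : Fin kk → ZMod p => ¬ ∃ c : ZMod p, m' = c • m),
                    Kinv * V (A.mulVec m') y) / Qf y) ^ s)) := by
            intro A
            apply mul_le_mul_of_nonneg_left _ (inv_nonneg.mpr hNr0.le)
            calc ∑ y, Kinv * V (A.mulVec m) y * (Pf A y / Qf y) ^ s
                ≤ ∑ y, (Kinv * (V (A.mulVec m) y *
                    ((∑ m' ∈ Finset.univ.filter
                      (fun m' : Fin kk → ZMod p => ∃ c : ZMod p, m' = c • m),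
                      Kinv * V (A.mulVec m') y) / Qf y) ^ s)
                  + Kinv * (V (A.mulVec m) y *
                    ((∑ m' ∈ Finset.univ.filter
                      (fun m' : Fin kk → ZMod p => ¬ ∃ c : ZMod p, m' = c • m),
                      Kinv * V (A.mulVec m') y) / Qf y) ^ s)) :=
                  Finset.sum_le_sum fun y _ => split2 m A y
              _ = _ := by
                  rw [Finset.sum_add_distrib, ← Finset.mul_sum, ← Finset.mul_sum]
          calc ∑ A : Matrix (Fin n) (Fin kk) (ZMod p),
                Nr⁻¹ * (∑ y, Kinv * V (A.mulVec m) y * (Pf A y / Qf y) ^ s)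
              ≤ ∑ A : Matrix (Fin n) (Fin kk) (ZMod p),
                Nr⁻¹ * (Kinv * (∑ y, V (A.mulVec m) y *
                  ((∑ m' ∈ Finset.univ.filter
                    (fun m' : Fin kk → ZMod p => ∃ c : ZMod p, m' = c • m),
                    Kinv * V (A.mulVec m') y) / Qf y) ^ s)
                + Kinv * (∑ y, V (A.mulVec m) y *
                  ((∑ m' ∈ Finset.univ.filter
                    (fun m' : Fin kk → ZMod p => ¬ ∃ c : ZMod p, m' = c • m),
                    Kinv * V (A.mulVec m') y) / Qf y) ^ s)) :=
                Finset.sum_le_sum fun A _ => hA A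
            _ = _ := by
                rw [Finset.sum_congr rfl fun A (_ : A ∈ Finset.univ) => mul_add Nr⁻¹ _ _,
                  Finset.sum_add_distrib]
                congr 1
                · rw [Finset.mul_sum]
                  exact Finset.sum_congr rfl fun A _ => by ring
                · rw [Finset.mul_sum]
                  exact Finset.sum_congr rfl fun A _ => by ring
      _ ≤ ∑ _m : Fin kk → ZMod p, (Kinv * (KS * ((p : ℝ) * φs ^ n)) + Kinv * 1) := by
          apply Finset.sum_le_sum
          intro m _
          exact add_le_add (mul_le_mul_of_nonneg_left (hTA m) hKinv0)
            (mul_le_mul_of_nonneg_left (hTB m) hKinv0)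
      _ = 1 + (p : ℝ) * KS * φs ^ n := by
          rw [Finset.sum_const, Finset.card_univ, nsmul_eq_mul, hcardm, hKinv]
          field_simp
          ring
  -- positivity of the Renyi-type sums
  have hPQ : ∀ (A : Matrix (Fin n) (Fin kk) (ZMod p)) y, 0 < Pf A y → 0 < Qf y := by
    intro A y hy
    rcases lt_or_eq_of_le (Qnn y) with h | h
    · exact h
    · exfalso
      have : Pf A y = 0 := by
        rw [hPf]
        apply Finset.sum_eq_zero
        intro m _
        rw [hQ0V y h.symm, mul_zero]
      linarith
  have cpos : ∀ A : Matrix (Fin n) (Fin kk) (ZMod p),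
      0 < ∑ y, Pf A y * (Pf A y / Qf y) ^ s := by
    intro A
    have hex : ∃ y, 0 < Pf A y := by
      by_contra h
      push_neg at h
      have h1 : ∑ y, Pf A y ≤ 0 := Finset.sum_nonpos fun y _ => h y
      rw [sumP A] at h1
      norm_num at h1
    obtain ⟨y, hy⟩ := hex
    have hQpos : 0 < Qf y := hPQ A y hy
    have hterm : 0 < Pf A y * (Pf A y / Qf y) ^ s :=
      mul_pos hy (Real.rpow_pos_of_pos (div_pos hy hQpos) s)
    refine lt_of_lt_of_le hterm (Finset.single_le_sum
      (f := fun y' => Pf A y' * (Pf A y' / Qf y') ^ s)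
      (fun y' _ => mul_nonneg (Pnn A y') (Real.rpow_nonneg (div_nonneg (Pnn A y') (Qnn y')) s))
      (Finset.mem_univ y))
  -- per-code divergence bounded by Renyi-type quantity
  have step1 : ∀ A : Matrix (Fin n) (Fin kk) (ZMod p),
      (∑ y, Pf A y * Real.log (Pf A y / Qf y))
      ≤ s⁻¹ * Real.log (∑ y, Pf A y * (Pf A y / Qf y) ^ s) := by
    intro A
    have e1 : ∑ y, Pf A y * Real.log (Pf A y / Qf y)
        = s⁻¹ * ∑ y, Pf A y * Real.log ((Pf A y / Qf y) ^ s) := by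
      rw [Finset.mul_sum]
      apply Finset.sum_congr rfl
      intro y _
      by_cases hPy : Pf A y = 0
      · rw [hPy]
        ring
      · have hPpos : 0 < Pf A y := lt_of_le_of_ne (Pnn A y) (Ne.symm hPy)
        have hQpos : 0 < Qf y := hPQ A y hPpos
        rw [Real.log_rpow (div_pos hPpos hQpos)]
        field_simp
    rw [e1]
    apply mul_le_mul_of_nonneg_left _ (inv_nonneg.mpr hs0.le)
    exact my_jensen_log Finset.univ (fun y => Pf A y) (fun y => (Pf A y / Qf y) ^ s)
      (fun y _ => Pnn A y) (sumP A)
      (fun y _ => Real.rpow_nonneg (div_nonneg (Pnn A y) (Qnn y)) s)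
      (fun y _ hy => Real.rpow_pos_of_pos (div_pos hy (hPQ A y hy)) s)
  -- final chain
  have cbarpos : 0 < ∑ A : Matrix (Fin n) (Fin kk) (ZMod p),
      Nr⁻¹ * (∑ y, Pf A y * (Pf A y / Qf y) ^ s) :=
    Finset.sum_pos (fun A _ => mul_pos (inv_pos.mpr hNr0) (cpos A)) Finset.univ_nonempty
  have hεnn : (0:ℝ) ≤ (p : ℝ) * KS * φs ^ n :=
    mul_nonneg (mul_nonneg hp0R.le hKS0) (pow_nonneg hφnn n)
  calc (∑ A : Matrix (Fin n) (Fin kk) (ZMod p), ∑ y : Fin n → Y,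
        Pf A y * Real.log (Pf A y / Qf y)) / Nr
      = ∑ A : Matrix (Fin n) (Fin kk) (ZMod p),
          Nr⁻¹ * (∑ y, Pf A y * Real.log (Pf A y / Qf y)) := by
        rw [Finset.sum_div]
        exact Finset.sum_congr rfl fun A _ => div_eq_inv_mul _ _
    _ ≤ ∑ A : Matrix (Fin n) (Fin kk) (ZMod p),
          Nr⁻¹ * (s⁻¹ * Real.log (∑ y, Pf A y * (Pf A y / Qf y) ^ s)) :=
        Finset.sum_le_sum fun A _ =>
          mul_le_mul_of_nonneg_left (step1 A) (inv_nonneg.mpr hNr0.le)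
    _ = s⁻¹ * ∑ A : Matrix (Fin n) (Fin kk) (ZMod p),
          Nr⁻¹ * Real.log (∑ y, Pf A y * (Pf A y / Qf y) ^ s) := by
        rw [Finset.mul_sum]
        exact Finset.sum_congr rfl fun A _ => by ring
    _ ≤ s⁻¹ * Real.log (∑ A : Matrix (Fin n) (Fin kk) (ZMod p),
          Nr⁻¹ * (∑ y, Pf A y * (Pf A y / Qf y) ^ s)) := by
        apply mul_le_mul_of_nonneg_left _ (inv_nonneg.mpr hs0.le)
        exact my_jensen_log Finset.univ (fun _ => Nr⁻¹)
          (fun A => ∑ y, Pf A y * (Pf A y / Qf y) ^ s)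
          (fun A _ => inv_nonneg.mpr hNr0.le) (by simpa using hconstA 1)
          (fun A _ => le_of_lt (cpos A)) (fun A _ _ => cpos A)
    _ ≤ s⁻¹ * Real.log (1 + (p : ℝ) * KS * φs ^ n) := by
        apply mul_le_mul_of_nonneg_left _ (inv_nonneg.mpr hs0.le)
        exact Real.log_le_log cbarpos cbar_le
    _ ≤ s⁻¹ * ((p : ℝ) * KS * φs ^ n) := by
        apply mul_le_mul_of_nonneg_left _ (inv_nonneg.mpr hs0.le)
        have h1 : (0:ℝ) < 1 + (p : ℝ) * KS * φs ^ n := by linarith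
        have := Real.log_le_sub_one_of_pos h1
        linarith

lemma my_phi_ge_one {Y : Type*} [Fintype Y] (q out : Y → ℝ)
    (hq0 : ∀ y, 0 ≤ q y) (hq1 : ∑ y, q y = 1)
    (out_nn : ∀ z, 0 ≤ out z) (sum_out : ∑ z, out z = 1)
    (q_out_pos : ∀ z, 0 < q z → 0 < out z)
    {s : ℝ} (hs0 : 0 < s) (hs1 : s < 1) :
    (1 : ℝ) ≤ ∑ y, q y * (q y / out y) ^ s := by
  set θ : ℝ := 1 / (1 + s) with hθ
  have hs1' : (0:ℝ) < 1 + s := by linarith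
  have hθ0 : 0 < θ := by rw [hθ]; positivity
  have hθ1 : θ < 1 := by
    rw [hθ, div_lt_one hs1']
    linarith
  have hφnn : 0 ≤ ∑ y, q y * (q y / out y) ^ s :=
    Finset.sum_nonneg fun z _ => mul_nonneg (hq0 z)
      (Real.rpow_nonneg (div_nonneg (hq0 z) (out_nn z)) s)
  have key : ∀ z ∈ Finset.univ (α := Y),
      (q z * (q z / out z) ^ s) ^ θ * (out z) ^ (1 - θ) = q z := by
    intro z _
    by_cases hz : q z = 0
    · rw [hz]
      simp [Real.zero_rpow (ne_of_gt hθ0)]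
    · have hqz : 0 < q z := lt_of_le_of_ne (hq0 z) (Ne.symm hz)
      have hoz : 0 < out z := q_out_pos z hqz
      have e1 : (1 + s) * θ = 1 := by
        rw [hθ]; field_simp
      have e4 : s * θ = 1 - θ := by nlinarith [e1]
      have h1 : q z * (q z / out z) ^ s = q z ^ (1 + s) / out z ^ s := by
        rw [Real.div_rpow (le_of_lt hqz) (le_of_lt hoz), Real.rpow_add hqz, Real.rpow_one]
        ring
      rw [h1, Real.div_rpow (Real.rpow_nonneg (le_of_lt hqz) _)
          (Real.rpow_nonneg (le_of_lt hoz) _),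
        ← Real.rpow_mul (le_of_lt hqz), ← Real.rpow_mul (le_of_lt hoz), e1, Real.rpow_one,
        e4, div_mul_cancel₀ _ (ne_of_gt (Real.rpow_pos_of_pos hoz _))]
  have h := my_hoelder Finset.univ (fun z => q z * (q z / out z) ^ s) out
    (fun z _ => mul_nonneg (hq0 z) (Real.rpow_nonneg (div_nonneg (hq0 z) (out_nn z)) s))
    (fun z _ => out_nn z) hθ0 hθ1
  rw [sum_out] at h
  rw [Finset.sum_congr rfl key, hq1, Real.one_rpow, mul_one] at h
  by_contra hcon
  push_neg at hcon
  have := Real.rpow_lt_one hφnn hcon hθ0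
  linarith

/-- Corollary 1 of the paper: random linear codes achieve
resolvability for regular channels, with exponentially vanishing expected
KL divergence, at any rate above the mutual information. -/
theorem stmt_18 (p : ℕ) (hp : p.Prime) [NeZero p] {Y : Type*} [Fintype Y]
    (π : ZMod p → Y → Y) (hbij : ∀ x, Function.Bijective (π x))
    (hact : ∀ x x' y, π x (π x' y) = π (x + x') y)
    (q : Y → ℝ) (hq0 : ∀ y, 0 ≤ q y) (hq1 : ∑ y, q y = 1)
    (W : ZMod p → Y → ℝ) (hW : ∀ x y, W x y = q (π x y))
    (out : Y → ℝ) (hout : ∀ y, out y = ∑ x : ZMod p, (1 / p : ℝ) * W x y)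
    (I R : ℝ)
    (hI : I = ∑ x : ZMod p, (1 / p : ℝ) * ∑ y, W x y * Real.log (W x y / out y))
    (hR : I < R)
    (k : ℕ → ℕ) (hk : ∀ n, k n = ⌈(n : ℝ) * R / Real.log p⌉₊)
    (P : ∀ n : ℕ, Matrix (Fin n) (Fin (k n)) (ZMod p) → (Fin n → Y) → ℝ)
    (hP : ∀ n A y, P n A y =
      ∑ m : Fin (k n) → ZMod p, (1 / (p : ℝ) ^ k n) * ∏ i, W (A.mulVec m i) (y i))
    (Q : ∀ n : ℕ, (Fin n → Y) → ℝ) (hQ : ∀ n y, Q n y = ∏ i, out (y i))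
    (D : ℕ → ℝ)
    (hD : ∀ n, D n =
      (∑ A : Matrix (Fin n) (Fin (k n)) (ZMod p),
        ∑ y : Fin n → Y, P n A y * Real.log (P n A y / Q n y)) /
        Fintype.card (Matrix (Fin n) (Fin (k n)) (ZMod p))) :
    ∃ ρ : ℝ, 0 < ρ ∧ ρ ≤ 1 ∧ ∃ δ : ℝ, 0 < δ ∧ ∃ N : ℕ, ∀ n ≥ N,
      D n ≤ (1 / ρ) * Real.exp (-(n : ℝ) * ρ * δ) := by
  classical
  haveI := Fact.mk hp
  have hp0R : (0 : ℝ) < p := by exact_mod_cast hp.pos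
  have hp2 : (2 : ℝ) ≤ p := by exact_mod_cast hp.two_le
  have hlogp : 0 < Real.log p := Real.log_pos (by linarith)
  have hout' : ∀ y, out y = ∑ x : ZMod p, (1 / p : ℝ) * q (π x y) := by
    intro y
    rw [hout y]
    exact Finset.sum_congr rfl fun x _ => by rw [hW]
  have hπ0 : ∀ z : Y, π 0 z = z := by
    intro z
    apply (hbij 0).1
    rw [hact 0 0 z, add_zero]
  have out_nn : ∀ z, 0 ≤ out z := by
    intro z
    rw [hout']
    exact Finset.sum_nonneg fun x _ => mul_nonneg (by positivity) (hq0 _)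
  have out_inv : ∀ (x : ZMod p) (z : Y), out (π x z) = out z := by
    intro x z
    rw [hout' (π x z), hout' z]
    rw [Fintype.sum_equiv (Equiv.addRight x) _ (fun w => (1 / p : ℝ) * q (π w z))]
    intro w
    rw [hact w x z]
    rfl
  have hq1x : ∀ x : ZMod p, ∑ z, q (π x z) = 1 := by
    intro x
    rw [Fintype.sum_bijective (π x) (hbij x) _ q (fun z => rfl)]
    exact hq1
  have sum_out : ∑ z, out z = 1 := by
    rw [Finset.sum_congr rfl fun z (_ : z ∈ Finset.univ) => hout' z, Finset.sum_comm]
    rw [Finset.sum_congr rfl fun x (_ : x ∈ Finset.univ) => (Finset.mul_sum _ _ _).symm]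
    rw [Finset.sum_congr rfl fun x (_ : x ∈ Finset.univ) => by rw [hq1x x, mul_one]]
    rw [Finset.sum_const, Finset.card_univ, ZMod.card, nsmul_eq_mul]
    field_simp
  have sumqx : ∀ z : Y, ∑ x : ZMod p, q (π x z) = p * out z := by
    intro z
    rw [hout', ← Finset.mul_sum]
    field_simp
  have q_le : ∀ (x : ZMod p) (z : Y), q (π x z) ≤ p * out z := by
    intro x z
    rw [← sumqx z]
    exact Finset.single_le_sum (f := fun x => q (π x z)) (fun x _ => hq0 _)
      (Finset.mem_univ x)
  have q_out_pos : ∀ z, 0 < q z → 0 < out z := by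
    intro z hz
    by_contra h
    push_neg at h
    have h0 : out z = 0 := le_antisymm h (out_nn z)
    have h1 := q_le 0 z
    rw [hπ0, h0, mul_zero] at h1
    linarith
  -- single-letter mutual information
  have hI' : I = ∑ y, q y * Real.log (q y / out y) := by
    rw [hI]
    have hx : ∀ x : ZMod p, ∑ y, W x y * Real.log (W x y / out y)
        = ∑ y, q y * Real.log (q y / out y) := by
      intro x
      refine Fintype.sum_bijective (π x) (hbij x) _ _ ?_
      intro y
      rw [hW, ← out_inv x y]
    rw [Finset.sum_congr rfl fun x (_ : x ∈ Finset.univ) => by rw [hx x]]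
    rw [Finset.sum_const, Finset.card_univ, ZMod.card, nsmul_eq_mul]
    field_simp
  obtain ⟨s, hs0, hs1, hsR⟩ := my_choose_s q out I R hq1 hI' hR
  set φs := ∑ y, q y * (q y / out y) ^ s with hφs
  have hΦeq : ∑ y, q y * Real.exp (s * Real.log (q y / out y)) = φs := by
    rw [hφs]
    apply Finset.sum_congr rfl
    intro y _
    by_cases hy : q y = 0
    · rw [hy, zero_mul, zero_mul]
    · have hqy : 0 < q y := lt_of_le_of_ne (hq0 y) (Ne.symm hy)
      have ho : 0 < out y := q_out_pos y hqy
      rw [Real.rpow_def_of_pos (div_pos hqy ho)]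
      ring_nf
  rw [hΦeq] at hsR
  have hφ1 : 1 ≤ φs := my_phi_ge_one q out hq0 hq1 out_nn sum_out q_out_pos hs0 hs1
  have hφpos : 0 < φs := lt_of_lt_of_le one_pos hφ1
  have hlogφ : 0 ≤ Real.log φs := Real.log_nonneg hφ1
  have hR0 : 0 < R := by nlinarith
  set δ := (s * R - Real.log φs) / (2 * s) with hδ
  have hδ0 : 0 < δ := div_pos (by linarith) (by linarith)
  refine ⟨s, hs0, hs1.le, δ, hδ0, ⌈Real.log p / (s * δ)⌉₊ + 1, ?_⟩
  intro n hn
  have hb := my_n_bound hp π hbij hact q hq0 hq1 out hout' hs0 hs1 φs hφs n (k n)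
    (fun v y => ∏ i, q (π (v i) (y i))) (fun v y => rfl)
    (P n) (by
      intro A y
      rw [hP n A y]
      apply Finset.sum_congr rfl
      intro m _
      congr 1
      exact Finset.prod_congr rfl fun i _ => by rw [hW])
    (Q n) (hQ n)
  rw [hD n]
  refine le_trans hb ?_
  rw [one_div]
  apply mul_le_mul_of_nonneg_left _ (inv_nonneg.mpr hs0.le)
  -- exponential bound
  have hkn : (n : ℝ) * R / Real.log p ≤ (k n : ℝ) := by
    rw [hk n]
    exact Nat.le_ceil _
  have f1 : (n : ℝ) * R ≤ (k n : ℝ) * Real.log p := by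
    rw [div_le_iff₀ hlogp] at hkn
    exact hkn
  have f2 : Real.log p ≤ (n : ℝ) * (s * δ) := by
    have hsδ : 0 < s * δ := mul_pos hs0 hδ0
    have h1 : Real.log p / (s * δ) ≤ (n : ℝ) := by
      have h2 : (⌈Real.log p / (s * δ)⌉₊ : ℝ) ≤ (n : ℝ) := by
        have : ⌈Real.log p / (s * δ)⌉₊ ≤ n := by omega
        exact_mod_cast this
      exact le_trans (Nat.le_ceil _) h2
    rw [div_le_iff₀ hsδ] at h1
    linarith [h1]
  have f3 : Real.log φs = s * R - 2 * s * δ := by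
    rw [hδ]
    field_simp
    ring
  have hLpos : (0:ℝ) < (p : ℝ) * ((p : ℝ) ^ k n) ^ (-s) * φs ^ n := by
    have h1 : (0:ℝ) < ((p : ℝ) ^ k n) ^ (-s) := Real.rpow_pos_of_pos (by positivity) _
    positivity
  rw [← Real.exp_log hLpos]
  apply Real.exp_le_exp.mpr
  rw [Real.log_mul (by positivity) (by positivity),
    Real.log_mul (by positivity) (ne_of_gt (Real.rpow_pos_of_pos (by positivity) _)),
    Real.log_rpow (by positivity), Real.log_pow, Real.log_pow]
  -- goal : log p + (-s) * (k n * log p) + n * log φs ≤ -(n) * s * δ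
  rw [f3]
  nlinarith [mul_le_mul_of_nonneg_left f1 hs0.le, f2]
end
end

section
/- Let Λ₃ ⊂ Λ₂ ⊂ Λ₁ be nested full-rank lattices in ℝⁿ, let R(Λ₃) be a fundamental region of Λ₃ and F a fundamental region of Λ₂ with quantizer Q_F : ℝⁿ → Λ₂ (the unique map with x − Q_F(x) ∈ F), and define the key map f : Λ₁ ∩ R(Λ₃) → Λ₂ ∩ R(Λ₃) by f(x) = [Q_F(x)] mod R(Λ₃). Then for every probability mass function p on the finite set Λ₁ ∩ R(Λ₃), the induced key distribution p_K(k) = Σ_{x ∈ Λ₁∩R(Λ₃) : f(x)=k} p(x) satisfies Σ_{k ∈ Λ₂∩R(Λ₃)} | p_K(k) − V(Λ₂)/V(Λ₃) | ≤ Σ_{x ∈ Λ₁∩R(Λ₃)} | p(x) − V(Λ₁)/V(Λ₃) |; that is, the total variational distance of the key from the uniform distribution on Λ₂/Λ₃ is at most the total variational distance of p from the uniform distribution on Λ₁/Λ₃. -/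
/-! The fibre of the key map over a key `k` is in bijection with `Λ₁ ∩ F` via
`x ↦ x - Q_F(x)`, with inverse `w ↦ [w + k] mod R(Λ₃)`. Since `Λ₁ ∩ F` represents `Λ₁/Λ₂`,
every fibre has `[Λ₁ : Λ₂] = V(Λ₂)/V(Λ₁)` elements (the index of a sublattice is the ratio of
covolumes), so the uniform mass `V(Λ₂)/V(Λ₃)` of a key is the sum of the uniform masses
`V(Λ₁)/V(Λ₃)` over its fibre. The triangle inequality on each fibre gives the bound. -/

open scoped Classical

open MeasureTheory Filter

noncomputable section

open Module Submodule Finset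

theorem sum_abs_sum_fiber_sub_le {X K : Type*} [Fintype X] [Fintype K] [DecidableEq K]
    (κ : X → K) (p : X → ℝ) (u : ℝ) :
    ∑ k, |∑ x with κ x = k, p x - #{x | κ x = k} * u| ≤ ∑ x, |p x - u| :=
  calc ∑ k, |∑ x with κ x = k, p x - #{x | κ x = k} * u|
      = ∑ k, |∑ x with κ x = k, (p x - u)| := by simp [sum_sub_distrib]
    _ ≤ ∑ k, ∑ x with κ x = k, |p x - u| := sum_le_sum fun k _ => abs_sum_le_sum_abs _ _
    _ = ∑ x, |p x - u| := sum_fiberwise _ _ _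

section Transversal

variable {E : Type*} [AddCommGroup E]

theorem eq_of_sub_mem_of_existsUnique {K : AddSubgroup E} {F : Set E}
    (hF : ∀ x, ∃! l ∈ K, x - l ∈ F) {x y : E} (hx : x ∈ F) (hy : y ∈ F) (hxy : x - y ∈ K) :
    x = y :=
  sub_eq_zero.mp <|
    ((hF x).unique ⟨K.zero_mem, by rwa [sub_zero]⟩ ⟨hxy, by rwa [sub_sub_cancel]⟩).symm

theorem AddSubgroup.relIndex_eq_card_inter {K H : AddSubgroup E} (hKH : K ≤ H) {F : Set E}
    (hF : ∀ x, ∃! l ∈ K, x - l ∈ F) : K.relIndex H = Nat.card ↥((H : Set E) ∩ F) := by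
  let e : ↥((H : Set E) ∩ F) → H ⧸ K.addSubgroupOf H := fun x => (⟨x, x.2.1⟩ : H)
  have he : e.Bijective := by
    constructor
    · intro x y hxy
      rw [QuotientAddGroup.eq, AddSubgroup.mem_addSubgroupOf] at hxy
      refine (Subtype.ext <| eq_of_sub_mem_of_existsUnique hF y.2.2 x.2.2 ?_).symm
      simpa [neg_add_eq_sub] using hxy
    · refine QuotientAddGroup.mk_surjective.forall.mpr fun h => ?_
      obtain ⟨l, ⟨hl, hlF⟩, -⟩ := hF h
      refine ⟨⟨h - l, H.sub_mem h.2 (hKH hl), hlF⟩, QuotientAddGroup.eq.mpr ?_⟩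
      simpa [AddSubgroup.mem_addSubgroupOf] using hl
  rw [AddSubgroup.relIndex, AddSubgroup.index_eq_card]
  exact (Nat.card_congr (Equiv.ofBijective e he)).symm

variable {H₁ H₂ H₃ : AddSubgroup E} {R F : Set E} {Q m : E → E}

theorem card_key_fiber_eq_card_inter (h₃₂ : H₃ ≤ H₂) (h₂₁ : H₂ ≤ H₁)
    (hR : ∀ x, ∃! l ∈ H₃, x - l ∈ R) (hF : ∀ x, ∃! l ∈ H₂, x - l ∈ F)
    (hQ : ∀ x, Q x ∈ H₂ ∧ x - Q x ∈ F) (hm : ∀ y, m y ∈ R ∧ m y - y ∈ H₃)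
    {k : E} (hk : k ∈ (H₂ : Set E) ∩ R) :
    Nat.card {x : ↥((H₁ : Set E) ∩ R) // m (Q x) = k} = Nat.card ↥((H₁ : Set E) ∩ F) := by
  have hQ_add : ∀ w ∈ F, ∀ l ∈ H₂, Q (w + l) = l := fun w hw l hl =>
    (hF (w + l)).unique (hQ _) ⟨hl, by rwa [add_sub_cancel_right]⟩
  have hm_eq : ∀ y, ∀ y' ∈ R, y - y' ∈ H₃ → m y = y' := fun y y' hy' hyy' =>
    eq_of_sub_mem_of_existsUnique hR (hm y).1 hy' (by
      simpa only [sub_add_sub_cancel] using H₃.add_mem (hm y).2 hyy')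
  have hQm : ∀ w ∈ F, Q (m (w + k)) = k + (m (w + k) - (w + k)) := fun w hw => by
    rw [← hQ_add w hw _ (H₂.add_mem hk.1 (h₃₂ (hm _).2))]
    congr 1
    abel
  refine Nat.card_congr
    { toFun := fun x => ⟨x - Q x, H₁.sub_mem x.1.2.1 (h₂₁ (hQ x).1), (hQ x).2⟩
      invFun := fun w => ⟨⟨m (w + k), ?_, (hm _).1⟩, ?_⟩
      left_inv := fun x => ?_
      right_inv := fun w => ?_ }
  · simpa using H₁.add_mem (h₃₂.trans h₂₁ (hm (w + k)).2) (H₁.add_mem w.2.1 (h₂₁ hk.1))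
  · rw [hQm w w.2.2]
    refine hm_eq _ _ hk.2 ?_
    simpa using (hm (w + k)).2
  · obtain ⟨⟨x, hx⟩, rfl⟩ := x
    refine Subtype.ext <| Subtype.ext <| hm_eq _ _ hx.2 ?_
    convert (hm (Q x)).2 using 1
    change x - Q x + m (Q x) - x = m (Q x) - Q x
    abel
  · refine Subtype.ext ?_
    simp only
    rw [hQm w w.2.2]
    abel

theorem tsum_abs_key_sub_le [DecidableEq E] (h₃₂ : H₃ ≤ H₂) (h₂₁ : H₂ ≤ H₁)
    (hfin : H₃.relIndex H₁ ≠ 0)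
    (hR : ∀ x, ∃! l ∈ H₃, x - l ∈ R) (hF : ∀ x, ∃! l ∈ H₂, x - l ∈ F)
    (hQ : ∀ x, Q x ∈ H₂ ∧ x - Q x ∈ F) (hm : ∀ y, m y ∈ R ∧ m y - y ∈ H₃)
    (p pK : E → ℝ)
    (hpK : ∀ k, pK k = ∑' x : ↥((H₁ : Set E) ∩ R), if m (Q x) = k then p x else 0) (u : ℝ) :
    ∑' k : ↥((H₂ : Set E) ∩ R), |pK k - H₂.relIndex H₁ * u| ≤
      ∑' x : ↥((H₁ : Set E) ∩ R), |p x - u| := by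
  have : Finite ↥((H₁ : Set E) ∩ R) :=
    Nat.finite_of_card_ne_zero (AddSubgroup.relIndex_eq_card_inter (h₃₂.trans h₂₁) hR ▸ hfin)
  have : Finite ↥((H₂ : Set E) ∩ R) :=
    Set.Finite.subset (Set.toFinite ((H₁ : Set E) ∩ R)) (Set.inter_subset_inter_left R h₂₁)
  have := Fintype.ofFinite ↥((H₁ : Set E) ∩ R)
  have := Fintype.ofFinite ↥((H₂ : Set E) ∩ R)
  let key : ↥((H₁ : Set E) ∩ R) → ↥((H₂ : Set E) ∩ R) := fun x =>
    ⟨m (Q x), by simpa using H₂.add_mem (h₃₂ (hm (Q x)).2) (hQ x).1, (hm _).1⟩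
  have hfiber : ∀ k, #{x | key x = k} = H₂.relIndex H₁ := fun k => by
    rw [AddSubgroup.relIndex_eq_card_inter h₂₁ hF,
      ← card_key_fiber_eq_card_inter h₃₂ h₂₁ hR hF hQ hm k.2, Nat.card_eq_fintype_card,
      Fintype.card_subtype]
    simp [key, Subtype.ext_iff]
  have hpK' : ∀ k : ↥((H₂ : Set E) ∩ R), pK k = ∑ x with key x = k, p x := fun k => by
    rw [hpK, tsum_fintype, Finset.sum_filter]
    simp [key, Subtype.ext_iff]
  simp only [tsum_fintype, hpK']
  simpa only [hfiber] using sum_abs_sum_fiber_sub_le key (p ·) u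

theorem ZLattice.covolume_span_eq_abs_det {E ι : Type*} [NormedAddCommGroup E]
    [InnerProductSpace ℝ E] [FiniteDimensional ℝ E] [MeasurableSpace E] [BorelSpace E]
    [Fintype ι] [DecidableEq ι] (b₀ : OrthonormalBasis ι ℝ E) (b : Basis ι ℝ E) :
    ZLattice.covolume (span ℤ (Set.range b)) = |b₀.toBasis.det b| := by
  rw [ZLattice.covolume_eq_measure_fundamentalDomain _ _ (ZSpan.isAddFundamentalDomain b volume),
    ZSpan.measureReal_fundamentalDomain b volume b₀.toBasis,
    measureReal_congr (ZSpan.fundamentalDomain_ae_parallelepiped _ volume), b₀.coe_toBasis,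
    measureReal_def, b₀.volume_parallelepiped, ENNReal.toReal_one, mul_one]

variable {n : ℕ}

def Matrix.colBasis (B : Matrix (Fin n) (Fin n) ℝ) (hB : IsUnit B.det) :
    Basis (Fin n) ℝ (EuclideanSpace ℝ (Fin n)) :=
  (EuclideanSpace.basisFun (Fin n) ℝ).toBasis.map
    (Matrix.toLinearEquiv (EuclideanSpace.basisFun (Fin n) ℝ).toBasis B hB)

theorem Matrix.colBasis_apply (B : Matrix (Fin n) (Fin n) ℝ) (hB : IsUnit B.det) (i j : Fin n) :
    B.colBasis hB j i = B i j := by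
  rw [Matrix.colBasis, Basis.map_apply, Matrix.toLinearEquiv_apply, Matrix.toLin_self]
  simp [Pi.single_apply]

theorem Matrix.covolume_span_colBasis (B : Matrix (Fin n) (Fin n) ℝ) (hB : IsUnit B.det) :
    ZLattice.covolume (span ℤ (Set.range (B.colBasis hB))) = |B.det| := by
  rw [ZLattice.covolume_span_eq_abs_det (EuclideanSpace.basisFun (Fin n) ℝ), Basis.det_apply]
  congr 2
  ext i j
  simp [Basis.toMatrix_apply, Matrix.colBasis_apply]

theorem Matrix.relIndex_span_colBasis {B B' : Matrix (Fin n) (Fin n) ℝ} (hB : IsUnit B.det)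
    (hB' : IsUnit B'.det)
    (h : span ℤ (Set.range (B'.colBasis hB')) ≤ span ℤ (Set.range (B.colBasis hB))) :
    ((span ℤ (Set.range (B'.colBasis hB'))).toAddSubgroup.relIndex
      (span ℤ (Set.range (B.colBasis hB))).toAddSubgroup : ℝ) = |B'.det| / |B.det| := by
  rw [← ZLattice.covolume_div_covolume_eq_relIndex' _ _ h, B.covolume_span_colBasis,
    B'.covolume_span_colBasis]

theorem IsLattice.exists_eq_span {L : Set (EuclideanSpace ℝ (Fin n))}
    {B : Matrix (Fin n) (Fin n) ℝ} (h : IsLattice n L B) :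
    ∃ hB : IsUnit B.det, L = span ℤ (Set.range (B.colBasis hB)) := by
  obtain ⟨hB, rfl⟩ := h
  refine ⟨hB, ?_⟩
  have hcoord : ∀ (z : Fin n → ℤ) i,
      (∑ j, z j • B.colBasis hB j) i = B.mulVec (fun j => (z j : ℝ)) i := fun z i => by
    simp [Matrix.mulVec, dotProduct, Matrix.colBasis_apply, mul_comm]
  ext x
  rw [SetLike.mem_coe, mem_span_range_iff_exists_fun]
  refine ⟨fun ⟨z, hz⟩ => ⟨z, ?_⟩, fun ⟨z, hz⟩ => ⟨z, fun i => hz ▸ hcoord z i⟩⟩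
  ext i
  rw [hcoord, hz]

theorem IsFundamental.existsUnique_sub_mem {L R : Set (EuclideanSpace ℝ (Fin n))}
    (h : IsFundamental n L R) (x : EuclideanSpace ℝ (Fin n)) : ∃! l ∈ L, x - l ∈ R := by
  obtain ⟨l, hl, r, hr, rfl⟩ := Set.mem_iUnion₂.mp (h.2.2 ▸ Set.mem_univ x)
  refine ⟨l, ⟨hl, by simpa using hr⟩, fun l' ⟨hl', hr'⟩ => ?_⟩
  by_contra hne
  refine Set.disjoint_left.mp (h.2.1 hl' hl hne) ⟨_, hr', ?_⟩ ⟨r, hr, rfl⟩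
  simp

theorem stmt_19_general (n : ℕ) (L₁ L₂ L₃ : Set (EuclideanSpace ℝ (Fin n)))
    (B₁ B₂ B₃ : Matrix (Fin n) (Fin n) ℝ)
    (h₁ : IsLattice n L₁ B₁) (h₂ : IsLattice n L₂ B₂) (h₃ : IsLattice n L₃ B₃)
    (h₃₂ : L₃ ⊆ L₂) (h₂₁ : L₂ ⊆ L₁)
    (R₃ : Set (EuclideanSpace ℝ (Fin n))) (hR₃ : IsFundamental n L₃ R₃)
    (F : Set (EuclideanSpace ℝ (Fin n))) (hF : IsFundamental n L₂ F)
    (Q : EuclideanSpace ℝ (Fin n) → EuclideanSpace ℝ (Fin n))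
    (hQ : ∀ x, Q x ∈ L₂ ∧ x - Q x ∈ F)
    (m : EuclideanSpace ℝ (Fin n) → EuclideanSpace ℝ (Fin n))
    (hm : ∀ y, m y ∈ R₃ ∧ m y - y ∈ L₃)
    (p : EuclideanSpace ℝ (Fin n) → ℝ)
    (pK : EuclideanSpace ℝ (Fin n) → ℝ)
    (hpK : ∀ k, pK k =
      ∑' x : ↥(L₁ ∩ R₃),
        if m (Q (x : EuclideanSpace ℝ (Fin n))) = k then p x else 0) :
    (∑' k : ↥(L₂ ∩ R₃),
        abs (pK (k : EuclideanSpace ℝ (Fin n)) - |B₂.det| / |B₃.det|)) ≤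
      ∑' x : ↥(L₁ ∩ R₃),
        abs (p (x : EuclideanSpace ℝ (Fin n)) - |B₁.det| / |B₃.det|) := by
  obtain ⟨hB₁, rfl⟩ := h₁.exists_eq_span
  obtain ⟨hB₂, rfl⟩ := h₂.exists_eq_span
  obtain ⟨hB₃, rfl⟩ := h₃.exists_eq_span
  have hidx₂₁ := Matrix.relIndex_span_colBasis hB₁ hB₂ h₂₁
  have hidx₃₁ := Matrix.relIndex_span_colBasis hB₁ hB₃ (h₃₂.trans h₂₁)
  have hdet₁ : |B₁.det| ≠ 0 := abs_ne_zero.mpr hB₁.ne_zero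
  have hdet₃ : |B₃.det| ≠ 0 := abs_ne_zero.mpr hB₃.ne_zero
  have hfin : (span ℤ (Set.range (B₃.colBasis hB₃))).toAddSubgroup.relIndex
      (span ℤ (Set.range (B₁.colBasis hB₁))).toAddSubgroup ≠ 0 := by
    rw [← Nat.cast_ne_zero (R := ℝ), hidx₃₁]
    exact div_ne_zero hdet₃ hdet₁
  rw [show |B₂.det| / |B₃.det| = |B₂.det| / |B₁.det| * (|B₁.det| / |B₃.det|) by
    field_simp, ← hidx₂₁]
  exact tsum_abs_key_sub_le (H₂ := (span ℤ (Set.range (B₂.colBasis hB₂))).toAddSubgroup)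
    h₃₂ h₂₁ hfin hR₃.existsUnique_sub_mem hF.existsUnique_sub_mem hQ hm p pK hpK _

/-- the total variational distance of the key from uniform is
at most the total variational distance of the quantized variable from uniform. -/
theorem stmt_19 (n : ℕ) (L₁ L₂ L₃ : Set (EuclideanSpace ℝ (Fin n)))
    (B₁ B₂ B₃ : Matrix (Fin n) (Fin n) ℝ)
    (h₁ : IsLattice n L₁ B₁) (h₂ : IsLattice n L₂ B₂) (h₃ : IsLattice n L₃ B₃)
    (h₃₂ : L₃ ⊆ L₂) (h₂₁ : L₂ ⊆ L₁)
    (R₃ : Set (EuclideanSpace ℝ (Fin n))) (hR₃ : IsFundamental n L₃ R₃)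
    (F : Set (EuclideanSpace ℝ (Fin n))) (hF : IsFundamental n L₂ F)
    (Q : EuclideanSpace ℝ (Fin n) → EuclideanSpace ℝ (Fin n))
    (hQ : ∀ x, Q x ∈ L₂ ∧ x - Q x ∈ F)
    (m : EuclideanSpace ℝ (Fin n) → EuclideanSpace ℝ (Fin n))
    (hm : ∀ y, m y ∈ R₃ ∧ m y - y ∈ L₃)
    (p : EuclideanSpace ℝ (Fin n) → ℝ) (hp : ∀ x, 0 ≤ p x)
    (hsupp : ∀ x, x ∉ L₁ ∩ R₃ → p x = 0)
    (hsum : ∑' x : ↥(L₁ ∩ R₃), p x = 1)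
    (pK : EuclideanSpace ℝ (Fin n) → ℝ)
    (hpK : ∀ k, pK k =
      ∑' x : ↥(L₁ ∩ R₃),
        if m (Q (x : EuclideanSpace ℝ (Fin n))) = k then p x else 0) :
    (∑' k : ↥(L₂ ∩ R₃),
        abs (pK (k : EuclideanSpace ℝ (Fin n)) - |B₂.det| / |B₃.det|)) ≤
      ∑' x : ↥(L₁ ∩ R₃),
        abs (p (x : EuclideanSpace ℝ (Fin n)) - |B₁.det| / |B₃.det|) :=
  stmt_19_general n L₁ L₂ L₃ B₁ B₂ B₃ h₁ h₂ h₃ h₃₂ h₂₁ R₃ hR₃ F hF Q hQ m hm p pK hpK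
end Transversal
end
end
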